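/- arXiv:1304.2539 — 10 statements merged into one kernel-verified Lean document; each statement's English description precedes it below -/
import Mathlib

section
/- Let f : ℝ → ℝ be differentiable on an open interval containing [a, b], where a < b, and suppose f' is integrable on [a, b]. Then (f(a) + f(b))/2 − (1/(b−a)) ∫_a^b f(x) dx = ((b−a)/2) ∫_0^1 (1 − 2t) f'(t·a + (1−t)·b) dt. -/
open MeasureTheory

/-- Trapezoid identity (Lemma 1): if `f` is differentiable on an open interval
`(c, d)` containing `[a, b]` with derivative `f'` integrable on `[a, b]`, then
`(f a + f b)/2 - (1/(b-a)) ∫_a^b f = ((b-a)/2) ∫_0^1 (1 - 2t) f'(ta + (1-t)b) dt`. -/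
theorem trapezoid_identity (f f' : ℝ → ℝ) (a b c d : ℝ) (hab : a < b)
    (hc : c < a) (hd : b < d)
    (hdiff : ∀ x ∈ Set.Ioo c d, HasDerivAt f (f' x) x)
    (hint : IntervalIntegrable f' volume a b) :
    (f a + f b) / 2 - (1 / (b - a)) * ∫ x in a..b, f x
      = ((b - a) / 2) * ∫ t in (0:ℝ)..1, (1 - 2 * t) * f' (t * a + (1 - t) * b) := by
  have hsub : Set.uIcc a b ⊆ Set.Ioo c d := by
    rw [Set.uIcc_of_le hab.le]
    exact fun x hx => ⟨hc.trans_le hx.1, hx.2.trans_lt hd⟩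
  have hba : b - a ≠ 0 := by linarith
  have hab' : a - b ≠ 0 := by linarith
  have hf : ∀ x ∈ Set.uIcc a b, HasDerivAt f (f' x) x := fun x hx => hdiff x (hsub hx)
  have hu : ∀ x ∈ Set.uIcc a b, HasDerivAt (fun y => 2 * y - a - b) 2 x := by
    intro x _
    simpa using (((hasDerivAt_id x).const_mul 2).sub_const a).sub_const b
  have hfc : IntervalIntegrable f volume a b := by
    apply ContinuousOn.intervalIntegrable
    exact fun x hx => (hf x hx).continuousAt.continuousWithinAt
  have ibp := intervalIntegral.integral_mul_deriv_eq_deriv_mul hu hf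
    intervalIntegrable_const hint
  -- substitution: x = (a-b)*t + b
  have key : ∫ t in (0:ℝ)..1, (1 - 2 * t) * f' (t * a + (1 - t) * b)
      = (b - a)⁻¹ * ((b - a)⁻¹ * ∫ x in a..b, (2 * x - a - b) * f' x) := by
    have hcomp := intervalIntegral.integral_comp_mul_add
      (a := (0:ℝ)) (b := 1) (fun x => (2 * x - a - b) * f' x) hab' b
    have heq : ∀ t : ℝ, (1 - 2 * t) * f' (t * a + (1 - t) * b)
        = (b - a)⁻¹ * ((2 * ((a - b) * t + b) - a - b) * f' ((a - b) * t + b)) := by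
      intro t
      have : (a - b) * t + b = t * a + (1 - t) * b := by ring
      rw [this]
      field_simp
      ring
    simp only [heq]
    rw [intervalIntegral.integral_const_mul, hcomp]
    rw [show (a - b) * 0 + b = b by ring, show (a - b) * 1 + b = a by ring,
      intervalIntegral.integral_symm a b]
    rw [smul_eq_mul, show (a - b)⁻¹ = -(b - a)⁻¹ by rw [show a - b = -(b - a) by ring, neg_inv]]
    ring
  rw [key, ibp]
  rw [intervalIntegral.integral_const_mul]
  field_simp
  ring
end

section
/- Let f : ℝ → ℝ be differentiable on an open interval containing [a, b], where a < b, and suppose f' is integrable on [a, b]. Then (f(a) + f(b))/2 − (1/(b−a)) ∫_a^b f(x) dx = ((b−a)/2) ∫_0^1 ∫_0^1 ( f'(t·a + (1−t)·b) − f'(u·a + (1−u)·b) ) (u − t) dt du. -/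
/-! Apply, to `φ t = f (t * a + (1 - t) * b) / (a - b)`, whose derivative is exactly
`f' (t * a + (1 - t) * b)`, the identity
`∫₀¹ ∫₀¹ (φ' t - φ' u) (u - t) dt du = ∫₀¹ φ' - 2 ∫₀¹ t φ' t = 2 ∫₀¹ φ - (φ 0 + φ 1)`,
obtained by expanding the product, the fundamental theorem of calculus and one integration by
parts; the substitution `x = t a + (1 - t) b` turns `∫₀¹ φ` into the mean of `f` over `[a, b]`. -/

open MeasureTheory intervalIntegral Set
open scoped Interval

section UnitInterval

variable {g φ φ' : ℝ → ℝ}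

theorem integral_sub_mul_sub_eq (hg : IntervalIntegrable g volume 0 1) (u : ℝ) :
    ∫ t in (0:ℝ)..1, (g t - g u) * (u - t)
      = u * (∫ t in (0:ℝ)..1, g t) - (∫ t in (0:ℝ)..1, t * g t) - u * g u + g u / 2 := by
  have htg : IntervalIntegrable (fun t => t * g t) volume 0 1 :=
    hg.continuousOn_mul continuousOn_id
  have hexpand : ∀ t, (g t - g u) * (u - t) = (u * g t - t * g t) + (g u * t - u * g u) :=
    fun t => by ring
  simp_rw [hexpand]
  rw [integral_add ((hg.const_mul u).sub htg)
      ((intervalIntegrable_id.const_mul (g u)).sub intervalIntegrable_const),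
    integral_sub (hg.const_mul u) htg,
    integral_sub (intervalIntegrable_id.const_mul (g u)) intervalIntegrable_const,
    intervalIntegral.integral_const_mul, intervalIntegral.integral_const_mul, integral_id,
    intervalIntegral.integral_const]
  simp only [smul_eq_mul]
  ring

theorem integral_integral_sub_mul_sub_eq (hg : IntervalIntegrable g volume 0 1) :
    ∫ u in (0:ℝ)..1, ∫ t in (0:ℝ)..1, (g t - g u) * (u - t)
      = (∫ t in (0:ℝ)..1, g t) - 2 * ∫ t in (0:ℝ)..1, t * g t := by
  have htg : IntervalIntegrable (fun t => t * g t) volume 0 1 :=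
    hg.continuousOn_mul continuousOn_id
  simp_rw [integral_sub_mul_sub_eq hg]
  rw [integral_add (((intervalIntegrable_id.mul_const _).sub intervalIntegrable_const).sub htg)
      (hg.div_const 2),
    integral_sub ((intervalIntegrable_id.mul_const _).sub intervalIntegrable_const) htg,
    integral_sub (intervalIntegrable_id.mul_const _) intervalIntegrable_const,
    intervalIntegral.integral_mul_const, integral_id, intervalIntegral.integral_const,
    intervalIntegral.integral_div]
  simp only [smul_eq_mul]
  ring

theorem integral_integral_deriv_sub_mul_sub_eq
    (hφ : ∀ t ∈ [[(0:ℝ), 1]], HasDerivAt φ (φ' t) t) (hφ' : IntervalIntegrable φ' volume 0 1) :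
    ∫ u in (0:ℝ)..1, ∫ t in (0:ℝ)..1, (φ' t - φ' u) * (u - t)
      = 2 * (∫ t in (0:ℝ)..1, φ t) - (φ 0 + φ 1) := by
  have hparts : ∫ t in (0:ℝ)..1, t * φ' t = φ 1 - ∫ t in (0:ℝ)..1, φ t := by
    simpa using integral_mul_deriv_eq_deriv_mul (fun t _ => hasDerivAt_id t) hφ
      intervalIntegrable_const hφ'
  rw [integral_integral_sub_mul_sub_eq hφ', integral_eq_sub_of_hasDerivAt hφ hφ', hparts]
  ring

end UnitInterval

theorem mul_add_one_sub_mul_eq (a b t : ℝ) : t * a + (1 - t) * b = (a - b) * t + b := by ring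

theorem hasDerivAt_mul_add_one_sub_mul (a b t : ℝ) :
    HasDerivAt (fun t => t * a + (1 - t) * b) (a - b) t := by
  simp_rw [mul_add_one_sub_mul_eq]
  simpa using ((hasDerivAt_id t).const_mul (a - b)).add_const b

theorem IntervalIntegrable.comp_mul_add_one_sub_mul {f : ℝ → ℝ} {a b : ℝ}
    (hf : IntervalIntegrable f volume a b) :
    IntervalIntegrable (fun t => f (t * a + (1 - t) * b)) volume 0 1 := by
  simp_rw [mul_add_one_sub_mul_eq]
  rcases eq_or_ne a b with rfl | hab
  · simp
  simpa [sub_ne_zero.2 hab] using ((hf.comp_add_right b).comp_mul_left (c := a - b)).symm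

theorem intervalIntegral.integral_comp_mul_add_one_sub_mul (f : ℝ → ℝ) {a b : ℝ} (hab : a ≠ b) :
    ∫ t in (0:ℝ)..1, f (t * a + (1 - t) * b) = (b - a)⁻¹ * ∫ x in a..b, f x := by
  simp_rw [mul_add_one_sub_mul_eq]
  rw [integral_comp_mul_add f (sub_ne_zero.2 hab), mul_one, mul_zero, zero_add, sub_add_cancel,
    integral_symm, smul_eq_mul, ← neg_sub b a, inv_neg, neg_mul_neg]

/-- Double-integral trapezoid identity (Lemma 2): if `f` is differentiable on an open
interval `(c, d)` containing `[a, b]` with derivative `f'` integrable on `[a, b]`, then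
`(f a + f b)/2 - (1/(b-a)) ∫_a^b f
  = ((b-a)/2) ∫_0^1 ∫_0^1 (f'(ta + (1-t)b) - f'(ua + (1-u)b)) (u - t) dt du`. -/
theorem trapezoid_double_integral_identity (f f' : ℝ → ℝ) (a b c d : ℝ) (hab : a < b)
    (hc : c < a) (hd : b < d)
    (hdiff : ∀ x ∈ Set.Ioo c d, HasDerivAt f (f' x) x)
    (hint : IntervalIntegrable f' volume a b) :
    (f a + f b) / 2 - (1 / (b - a)) * ∫ x in a..b, f x
      = ((b - a) / 2) *
          ∫ u in (0:ℝ)..1, ∫ t in (0:ℝ)..1,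
            (f' (t * a + (1 - t) * b) - f' (u * a + (1 - u) * b)) * (u - t) := by
  have hab' : a - b ≠ 0 := sub_ne_zero.2 hab.ne
  have hba : b - a ≠ 0 := sub_ne_zero.2 hab.ne'
  have hφ : ∀ t ∈ [[(0:ℝ), 1]],
      HasDerivAt (fun t => f (t * a + (1 - t) * b) / (a - b)) (f' (t * a + (1 - t) * b)) t := by
    intro t ht
    rw [uIcc_of_le zero_le_one] at ht
    have hmem : t * a + (1 - t) * b ∈ Ioo c d := by
      constructor <;> nlinarith [ht.1, ht.2]
    have hcomp := ((hdiff _ hmem).comp t (hasDerivAt_mul_add_one_sub_mul a b t)).div_const (a - b)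
    rwa [mul_div_cancel_right₀ _ hab'] at hcomp
  rw [integral_integral_deriv_sub_mul_sub_eq hφ hint.comp_mul_add_one_sub_mul,
    intervalIntegral.integral_div, integral_comp_mul_add_one_sub_mul f hab.ne]
  simp only [zero_mul, sub_zero, one_mul, zero_add, sub_self, add_zero]
  field_simp
  ring
end

section
/- Let 0 ≤ a < b, let α ∈ [0,1], m ∈ (0,1], s ∈ (0,1], and let f : ℝ → ℝ be differentiable on an open interval containing [a, b/m] with f' integrable on [a, b]. If |f'| is s-(α,m)-convex, i.e. for all x, y ∈ [a, b] and t ∈ [0,1], |f'(t·x + (1−t)·y)| ≤ t^{αs} |f'(x)| + m (1 − t^{αs}) |f'(y/m)|, then |(f(a)+f(b))/2 − (1/(b−a)) ∫_a^b f(x) dx| ≤ ((b−a)/2) [ v₁ |f'(a)| + v₂ |f'(b/m)| ], where v₁ = (1 + 2^{αs}·(αs)) / (2^{αs} (αs+1)(αs+2)) and v₂ = m (1/2 − v₁). -/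
/-!
Integrating by parts against `x - (a + b) / 2` and substituting `x = t a + (1 - t) b` gives the
identity `(f a + f b) / 2 - (b - a)⁻¹ ∫_a^b f = (b - a) / 2 ∫_0^1 (1 - 2t) f'(t a + (1 - t) b) dt`.
The convexity hypothesis at the endpoints `a`, `b` bounds the integrand by
`|1 - 2t| (m |f'(b/m)| + (|f' a| - m |f'(b/m)|) t^(αs))`, and `v₁ = ∫_0^1 |1 - 2t| t^(αs) dt`
while `∫_0^1 |1 - 2t| dt = 1/2`.
-/

open MeasureTheory Set

theorem trapezoid_sub_average_eq_integral {f f' : ℝ → ℝ} {a b : ℝ} (hab : a ≠ b)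
    (hf : ∀ x ∈ uIcc a b, HasDerivAt f (f' x) x) (hf' : IntervalIntegrable f' volume a b) :
    (f a + f b) / 2 - 1 / (b - a) * ∫ x in a..b, f x
      = (b - a) / 2 * ∫ t in (0:ℝ)..1, (1 - 2 * t) * f' (t * a + (1 - t) * b) := by
  have hba : b - a ≠ 0 := sub_ne_zero.2 hab.symm
  have hparts := intervalIntegral.integral_mul_deriv_eq_deriv_mul
    (fun x _ => (hasDerivAt_id x).sub_const ((a + b) / 2)) hf intervalIntegrable_const hf'
  have hsubst : ∫ t in (0:ℝ)..1, (1 - 2 * t) * f' (t * a + (1 - t) * b)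
      = 2 / (b - a) ^ 2 * ∫ x in a..b, (x - (a + b) / 2) * f' x := by
    have hcomp := intervalIntegral.integral_comp_mul_add
      (fun x => (x - (a + b) / 2) * f' x) (sub_ne_zero.2 hab) b (a := 0) (b := 1)
    simp only [mul_zero, zero_add, mul_one, sub_add_cancel, smul_eq_mul] at hcomp
    rw [intervalIntegral.integral_symm a b] at hcomp
    calc ∫ t in (0:ℝ)..1, (1 - 2 * t) * f' (t * a + (1 - t) * b)
        = ∫ t in (0:ℝ)..1,
            2 / (b - a) * (((a - b) * t + b - (a + b) / 2) * f' ((a - b) * t + b)) :=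
          intervalIntegral.integral_congr fun t _ => by
            rw [show t * a + (1 - t) * b = (a - b) * t + b by ring]
            field_simp
            ring
      _ = 2 / (b - a) ^ 2 * ∫ x in a..b, (x - (a + b) / 2) * f' x := by
          rw [intervalIntegral.integral_const_mul, hcomp]
          field_simp
          ring
  rw [hsubst]
  simp only [one_mul, id] at hparts
  rw [← mul_assoc, hparts]
  field_simp
  ring

theorem integral_one_sub_two_mul_mul_rpow {q x y : ℝ} (hq : -1 < q) (hx : 0 ≤ x) (hy : 0 ≤ y) :
    ∫ t in x..y, (1 - 2 * t) * t ^ q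
      = (y ^ (q + 1) - x ^ (q + 1)) / (q + 1) - 2 * ((y ^ (q + 2) - x ^ (q + 2)) / (q + 2)) := by
  have hpow : ∀ r : ℝ, -1 < r → IntervalIntegrable (fun t : ℝ => t ^ r) volume x y :=
    fun r hr => intervalIntegral.intervalIntegrable_rpow' hr
  have hcongr : ∫ t in x..y, (1 - 2 * t) * t ^ q = ∫ t in x..y, (t ^ q - 2 * t ^ (q + 1)) := by
    refine intervalIntegral.integral_congr fun t ht => ?_
    have ht0 : 0 ≤ t := le_trans (le_min hx hy) ht.1
    simp only [Real.rpow_add_one' ht0 (by linarith : q + 1 ≠ 0)]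
    ring
  rw [hcongr, intervalIntegral.integral_sub (hpow q hq) ((hpow (q + 1) (by linarith)).const_mul 2),
    intervalIntegral.integral_const_mul, integral_rpow (Or.inl hq),
    integral_rpow (Or.inl (by linarith)), add_assoc, one_add_one_eq_two]

theorem integral_abs_one_sub_two_mul_mul_rpow {q : ℝ} (hq : -1 < q) :
    ∫ t in (0:ℝ)..1, |1 - 2 * t| * t ^ q
      = (1 + 2 ^ q * q) / (2 ^ q * (q + 1) * (q + 2)) := by
  have hint : ∀ x y : ℝ, IntervalIntegrable (fun t : ℝ => |1 - 2 * t| * t ^ q) volume x y :=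
    fun x y => (intervalIntegral.intervalIntegrable_rpow' hq).continuousOn_mul (by fun_prop)
  have hleft : ∫ t in (0:ℝ)..(1/2), |1 - 2 * t| * t ^ q
      = ∫ t in (0:ℝ)..(1/2), (1 - 2 * t) * t ^ q :=
    intervalIntegral.integral_congr fun t ht => by
      rw [uIcc_of_le (by norm_num)] at ht
      simp only [abs_of_nonneg (by linarith [ht.2] : 0 ≤ 1 - 2 * t)]
  have hright : ∫ t in (1/2:ℝ)..1, |1 - 2 * t| * t ^ q
      = -∫ t in (1/2:ℝ)..1, (1 - 2 * t) * t ^ q := by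
    rw [← intervalIntegral.integral_neg]
    refine intervalIntegral.integral_congr fun t ht => ?_
    rw [uIcc_of_le (by norm_num)] at ht
    simp only [abs_of_nonpos (by linarith [ht.1] : 1 - 2 * t ≤ 0)]
    ring
  have hhalf : ∀ r : ℝ, ((1:ℝ) / 2) ^ r = (2 ^ r)⁻¹ := fun r => by
    rw [one_div, Real.inv_rpow zero_le_two]
  rw [← intervalIntegral.integral_add_adjacent_intervals (hint 0 (1/2)) (hint (1/2) 1),
    hleft, hright,
    integral_one_sub_two_mul_mul_rpow hq le_rfl (by norm_num),
    integral_one_sub_two_mul_mul_rpow hq (by norm_num) zero_le_one, hhalf, hhalf,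
    Real.zero_rpow (by linarith), Real.zero_rpow (by linarith), Real.one_rpow, Real.one_rpow,
    Real.rpow_add_one two_ne_zero, Real.rpow_add two_pos, Real.rpow_two]
  have : (0:ℝ) < 2 ^ q := Real.rpow_pos_of_pos two_pos q
  have : (0:ℝ) < q + 1 := by linarith
  have : (0:ℝ) < q + 2 := by linarith
  field_simp
  ring

theorem integral_abs_one_sub_two_mul_mul_add_rpow {q : ℝ} (hq : -1 < q) (u v : ℝ) :
    ∫ t in (0:ℝ)..1, |1 - 2 * t| * (u + v * t ^ q)
      = u / 2 + v * ((1 + 2 ^ q * q) / (2 ^ q * (q + 1) * (q + 2))) := by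
  have hrpow : IntervalIntegrable (fun t : ℝ => |1 - 2 * t| * t ^ q) volume 0 1 :=
    (intervalIntegral.intervalIntegrable_rpow' hq).continuousOn_mul (by fun_prop)
  have habs : ∫ t in (0:ℝ)..1, |1 - 2 * t| = 1 / 2 := by
    simpa using integral_abs_one_sub_two_mul_mul_rpow (q := 0) (by norm_num)
  have hsplit : ∀ t : ℝ,
      |1 - 2 * t| * (u + v * t ^ q) = u * |1 - 2 * t| + v * (|1 - 2 * t| * t ^ q) :=
    fun t => by ring
  simp only [hsplit]
  rw [intervalIntegral.integral_add ((Continuous.intervalIntegrable (by fun_prop) 0 1).const_mul u)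
      (hrpow.const_mul v), intervalIntegral.integral_const_mul, intervalIntegral.integral_const_mul,
    habs, integral_abs_one_sub_two_mul_mul_rpow hq]
  ring

/-- Theorem 1: if `|f'|` is `s`-`(α,m)`-convex (first sense), then a trapezoid-type
Hermite–Hadamard estimate holds with constants `v₁, v₂`. -/
theorem hh_s_alpha_m_convex_abs_deriv (f f' : ℝ → ℝ) (a b α m s c d : ℝ)
    (ha : 0 ≤ a) (hab : a < b)
    (hα : α ∈ Set.Icc (0:ℝ) 1) (hm : m ∈ Set.Ioc (0:ℝ) 1) (hs : s ∈ Set.Ioc (0:ℝ) 1)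
    (hc : c < a) (hd : b / m < d)
    (hdiff : ∀ x ∈ Set.Ioo c d, HasDerivAt f (f' x) x)
    (hint : IntervalIntegrable f' volume a b)
    (hconv : ∀ x ∈ Set.Icc a b, ∀ y ∈ Set.Icc a b, ∀ t ∈ Set.Icc (0:ℝ) 1,
      |f' (t * x + (1 - t) * y)| ≤
        t ^ (α * s) * |f' x| + m * (1 - t ^ (α * s)) * |f' (y / m)|) :
    |(f a + f b) / 2 - (1 / (b - a)) * ∫ x in a..b, f x| ≤
      ((b - a) / 2) *
        ((1 + 2 ^ (α * s) * (α * s)) / (2 ^ (α * s) * (α * s + 1) * (α * s + 2)) * |f' a|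
          + m * (1 / 2 -
              (1 + 2 ^ (α * s) * (α * s)) / (2 ^ (α * s) * (α * s + 1) * (α * s + 2)))
            * |f' (b / m)|) := by
  set q := α * s
  set A := |f' a|
  set B := |f' (b / m)|
  have hq : -1 < q := by linarith [mul_nonneg hα.1 hs.1.le]
  have hb_le : b ≤ b / m := le_div_self (by linarith) hm.1 hm.2
  have hderiv : ∀ x ∈ uIcc a b, HasDerivAt f (f' x) x := fun x hx => by
    rw [uIcc_of_le hab.le] at hx
    exact hdiff x ⟨hc.trans_le hx.1, (hx.2.trans hb_le).trans_lt hd⟩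
  have hbound : ∀ t ∈ Icc (0:ℝ) 1,
      ‖(1 - 2 * t) * f' (t * a + (1 - t) * b)‖ ≤ |1 - 2 * t| * (m * B + (A - m * B) * t ^ q) :=
    fun t ht => by
      rw [Real.norm_eq_abs, abs_mul]
      refine mul_le_mul_of_nonneg_left ?_ (abs_nonneg _)
      exact (hconv a ⟨le_rfl, hab.le⟩ b ⟨hab.le, le_rfl⟩ t ht).trans_eq (by ring)
  have hmajorant :
      IntervalIntegrable (fun t => |1 - 2 * t| * (m * B + (A - m * B) * t ^ q)) volume 0 1 :=
    (intervalIntegrable_const.add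
      ((intervalIntegral.intervalIntegrable_rpow' hq).const_mul _)).continuousOn_mul (by fun_prop)
  rw [trapezoid_sub_average_eq_integral hab.ne hderiv hint, abs_mul,
    abs_of_pos (by linarith : 0 < (b - a) / 2)]
  calc (b - a) / 2 * |∫ t in (0:ℝ)..1, (1 - 2 * t) * f' (t * a + (1 - t) * b)|
      ≤ (b - a) / 2 * ∫ t in (0:ℝ)..1, |1 - 2 * t| * (m * B + (A - m * B) * t ^ q) := by
        gcongr
        exact intervalIntegral.norm_integral_le_of_norm_le zero_le_one
          (ae_of_all _ fun t ht => hbound t (Ioc_subset_Icc_self ht)) hmajorant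
    _ = _ := by
        rw [integral_abs_one_sub_two_mul_mul_add_rpow hq]
        ring
end

section
/- Let 0 ≤ a < b, let α ∈ [0,1], m ∈ (0,1], s ∈ (0,1], let p > 1 and q = p/(p−1), and let f : ℝ → ℝ be differentiable on an open interval containing [a, b/m] with f' integrable on [a, b]. If |f'|^q is s-(α,m)-convex, i.e. for all x, y ∈ [a, b] and t ∈ [0,1], |f'(t·x + (1−t)·y)|^q ≤ t^{αs} |f'(x)|^q + m (1 − t^{αs}) |f'(y/m)|^q, then |(f(a)+f(b))/2 − (1/(b−a)) ∫_a^b f(x) dx| ≤ ((b−a) / (2 (p+1)^{1/p})) · [ ( |f'(a)|^q + m·αs·|f'(b/m)|^q ) / (αs + 1) ]^{1/q}. -/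
/-! Integration by parts gives `(f a + f b) / 2 - ⨍ f = ⨍ (x - (a + b) / 2) * f' x`. Hölder's
inequality for averages bounds the right-hand side by
`(⨍ |x - (a + b) / 2| ^ p) ^ (1 / p) * (⨍ |f'| ^ q) ^ (1 / q)`. The first average is
`((b - a) / 2) ^ p / (p + 1)`. Substituting `x = t a + (1 - t) b` in the second one and using the
convexity hypothesis at the endpoints bounds it by
`∫₀¹ (t ^ (α s) |f' a| ^ q + m (1 - t ^ (α s)) |f' (b / m)| ^ q) dt
  = (|f' a| ^ q + m α s |f' (b / m)| ^ q) / (α s + 1)`. -/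

open MeasureTheory Set Interval

instance isFiniteMeasure_restrict_uIoc (a b : ℝ) : IsFiniteMeasure (volume.restrict (Ι a b)) :=
  isFiniteMeasure_restrict.2 (by simp)

theorem trapezoid_sub_interval_average_eq {f f' : ℝ → ℝ} {a b : ℝ} (hab : a ≠ b)
    (hf : ∀ x ∈ [[a, b]], HasDerivAt f (f' x) x) (hf' : IntervalIntegrable f' volume a b) :
    (f a + f b) / 2 - ⨍ x in a..b, f x = ⨍ x in a..b, (x - (a + b) / 2) * f' x := by
  have hparts := intervalIntegral.integral_mul_deriv_eq_deriv_mul (u := fun x => x - (a + b) / 2)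
    (fun x _ => (hasDerivAt_id' x).sub_const ((a + b) / 2)) hf intervalIntegrable_const hf'
  rw [interval_average_eq_div, interval_average_eq_div, hparts]
  field_simp [sub_ne_zero.2 hab.symm]
  ring

theorem abs_average_mul_le_Lp_mul_Lq {α : Type*} [MeasurableSpace α] {μ : Measure α}
    {p q : ℝ} (hpq : p.HolderConjugate q) {f g : α → ℝ}
    (hf : MemLp f (ENNReal.ofReal p) μ) (hg : MemLp g (ENNReal.ofReal q) μ) :
    |⨍ x, f x * g x ∂μ| ≤
      (⨍ x, |f x| ^ p ∂μ) ^ (1 / p) * (⨍ x, |g x| ^ q ∂μ) ^ (1 / q) := by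
  set c := (μ.real univ)⁻¹
  have hc : 0 ≤ c := inv_nonneg.2 measureReal_nonneg
  have hc_split : c = c ^ (1 / p) * c ^ (1 / q) := by
    rw [← Real.rpow_add' hc (by simp [hpq.inv_add_inv_eq_one]), one_div, one_div,
      hpq.inv_add_inv_eq_one, Real.rpow_one]
  simp only [average_eq, smul_eq_mul]
  rw [abs_mul, abs_of_nonneg hc,
    Real.mul_rpow hc (integral_nonneg fun x => by positivity),
    Real.mul_rpow hc (integral_nonneg fun x => by positivity)]
  calc c * |∫ x, f x * g x ∂μ| ≤ c * ∫ x, |f x| * |g x| ∂μ := by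
        gcongr
        simpa only [abs_mul] using
          abs_integral_le_integral_abs (f := fun x => f x * g x) (μ := μ)
    _ ≤ c * ((∫ x, |f x| ^ p ∂μ) ^ (1 / p) * (∫ x, |g x| ^ q ∂μ) ^ (1 / q)) := by
        gcongr
        exact integral_mul_norm_le_Lp_mul_Lq hpq hf hg
    _ = _ := by
        conv_lhs => rw [hc_split]
        ring

theorem integral_abs_rpow_symmetric {h p : ℝ} (hh : 0 ≤ h) (hp : 0 ≤ p) :
    ∫ x in -h..h, |x| ^ p = 2 * (h ^ (p + 1) / (p + 1)) := by
  have hcont : Continuous fun x : ℝ => |x| ^ p := continuous_abs.rpow_const fun _ => Or.inr hp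
  have hpos : ∫ x in (0:ℝ)..h, |x| ^ p = h ^ (p + 1) / (p + 1) := by
    rw [intervalIntegral.integral_congr (g := fun x => x ^ p) fun x hx => by
        rw [abs_of_nonneg (uIcc_of_le hh ▸ hx).1],
      integral_rpow (Or.inl (by linarith)), Real.zero_rpow (by linarith), sub_zero]
  have hneg : ∫ x in -h..0, |x| ^ p = ∫ x in (0:ℝ)..h, |x| ^ p := by
    simpa using (intervalIntegral.integral_comp_neg (a := 0) (b := h) fun x => |x| ^ p).symm
  rw [← intervalIntegral.integral_add_adjacent_intervals (b := 0) (hcont.intervalIntegrable _ _)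
    (hcont.intervalIntegrable _ _), hneg, hpos]
  ring

theorem interval_average_abs_sub_midpoint_rpow {a b p : ℝ} (hab : a < b) (hp : 0 ≤ p) :
    ⨍ x in a..b, |x - (a + b) / 2| ^ p = ((b - a) / 2) ^ p / (p + 1) := by
  have hh : 0 < (b - a) / 2 := by linarith
  rw [interval_average_eq_div, intervalIntegral.integral_comp_sub_right (fun x => |x| ^ p),
    show a - (a + b) / 2 = -((b - a) / 2) by ring, show b - (a + b) / 2 = (b - a) / 2 by ring,
    integral_abs_rpow_symmetric hh.le hp, Real.rpow_add hh, Real.rpow_one]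
  field_simp [(sub_pos.2 hab).ne']

theorem interval_average_eq_integral_unitInterval {a b : ℝ} (hab : a ≠ b) (g : ℝ → ℝ) :
    ⨍ x in a..b, g x = ∫ t in (0:ℝ)..1, g (t * a + (1 - t) * b) := by
  have hba : a - b ≠ 0 := sub_ne_zero.2 hab
  simp_rw [show ∀ t : ℝ, t * a + (1 - t) * b = b + (a - b) * t by intro t; ring]
  rw [intervalIntegral.integral_comp_add_mul _ hba, interval_average_eq, mul_zero, mul_one,
    add_zero, add_sub_cancel, intervalIntegral.integral_symm, smul_neg, ← neg_smul, ← inv_neg,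
    neg_sub]

theorem le_max_of_le_rpow_combination {g : ℝ → ℝ} {a b r A B : ℝ} (hab : a ≤ b)
    (hr : 0 ≤ r)
    (hg : ∀ t ∈ Icc (0:ℝ) 1, g (t * a + (1 - t) * b) ≤ t ^ r * A + (1 - t ^ r) * B) :
    ∀ x ∈ Icc a b, g x ≤ max A B := by
  intro x hx
  rw [← segment_eq_Icc hab] at hx
  obtain ⟨t, u, ht, hu, htu, rfl⟩ := hx
  obtain rfl : u = 1 - t := by linarith
  have h0 : 0 ≤ t ^ r := Real.rpow_nonneg ht r
  have h1 : t ^ r ≤ 1 := Real.rpow_le_one ht (by linarith) hr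
  calc g (t • a + (1 - t) • b) ≤ t ^ r * A + (1 - t ^ r) * B := hg t ⟨ht, by linarith⟩
    _ ≤ t ^ r * max A B + (1 - t ^ r) * max A B := by gcongr <;> first | linarith | simp
    _ = max A B := by ring

theorem interval_average_le_of_le_rpow_combination {g : ℝ → ℝ} {a b r A B : ℝ} (hab : a < b)
    (hr : 0 ≤ r) (hgi : IntervalIntegrable g volume a b)
    (hg : ∀ t ∈ Icc (0:ℝ) 1, g (t * a + (1 - t) * b) ≤ t ^ r * A + (1 - t ^ r) * B) :
    ⨍ x in a..b, g x ≤ (A + r * B) / (r + 1) := by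
  have hba : 0 < b - a := sub_pos.2 hab
  set φ : ℝ → ℝ := fun t => t ^ r * A + (1 - t ^ r) * B
  have hφ : Continuous φ := by
    have := Real.continuous_rpow_const hr
    fun_prop
  have hle : ∀ x ∈ Icc a b, g x ≤ φ ((b - x) / (b - a)) := by
    intro x hx
    have ht : (b - x) / (b - a) ∈ Icc (0:ℝ) 1 :=
      ⟨div_nonneg (by linarith [hx.2]) hba.le, (div_le_one hba).2 (by linarith [hx.1])⟩
    convert hg _ ht using 2
    field_simp
    ring
  calc ⨍ x in a..b, g x ≤ ⨍ x in a..b, φ ((b - x) / (b - a)) := by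
        simp only [interval_average_eq, smul_eq_mul]
        gcongr
        exact intervalIntegral.integral_mono_on hab.le hgi
          ((hφ.comp (by fun_prop)).intervalIntegrable _ _) hle
    _ = ∫ t in (0:ℝ)..1, φ t := by
        rw [interval_average_eq_integral_unitInterval hab.ne]
        congr with t
        congr 1
        field_simp
        ring
    _ = (A + r * B) / (r + 1) := by
        have hrpow : IntervalIntegrable (fun t : ℝ => t ^ r) volume 0 1 :=
          intervalIntegral.intervalIntegrable_rpow' (by linarith)
        simp_rw [φ, show ∀ t : ℝ, t ^ r * A + (1 - t ^ r) * B = t ^ r * (A - B) + B by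
          intro t; ring]
        rw [intervalIntegral.integral_add (hrpow.mul_const _) intervalIntegrable_const,
          intervalIntegral.integral_mul_const, integral_rpow (Or.inl (by linarith)),
          Real.one_rpow, Real.zero_rpow (by linarith), intervalIntegral.integral_const,
          smul_eq_mul]
        field_simp
        ring

theorem memLp_of_ae_abs_rpow_le {α : Type*} [MeasurableSpace α] {μ : Measure α}
    [IsFiniteMeasure μ] {f : α → ℝ} {q C : ℝ} (hq : 0 < q) (hf : AEStronglyMeasurable f μ)
    (hC : ∀ᵐ x ∂μ, |f x| ^ q ≤ C) (p : ENNReal) : MemLp f p μ := by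
  refine MemLp.of_bound hf (C ^ q⁻¹) (hC.mono fun x hx => ?_)
  rw [Real.norm_eq_abs, ← Real.rpow_rpow_inv (abs_nonneg (f x)) hq.ne']
  exact Real.rpow_le_rpow (by positivity) hx (inv_nonneg.2 hq.le)

theorem memLp_of_abs_rpow_le_rpow_combination {f : ℝ → ℝ} {a b q r A B : ℝ} (hq : 0 < q)
    (hab : a ≤ b) (hr : 0 ≤ r) (hf : IntervalIntegrable f volume a b)
    (hle : ∀ t ∈ Icc (0:ℝ) 1, |f (t * a + (1 - t) * b)| ^ q ≤ t ^ r * A + (1 - t ^ r) * B)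
    (p : ENNReal) : MemLp f p (volume.restrict (Ι a b)) :=
  memLp_of_ae_abs_rpow_le hq hf.def'.aestronglyMeasurable
    ((ae_restrict_mem measurableSet_uIoc).mono fun x hx =>
      le_max_of_le_rpow_combination (g := fun x => |f x| ^ q) hab hr hle x
        (uIcc_of_le hab ▸ uIoc_subset_uIcc hx)) p

theorem intervalIntegrable_abs_rpow_of_memLp {f : ℝ → ℝ} {a b q : ℝ} (hq : 0 ≤ q)
    (hf : MemLp f (ENNReal.ofReal q) (volume.restrict (Ι a b))) :
    IntervalIntegrable (fun x => |f x| ^ q) volume a b := by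
  have h := hf.integrable_norm_rpow'
  rw [ENNReal.toReal_ofReal hq] at h
  exact intervalIntegrable_iff.2 h

theorem memLp_sub_const_restrict_uIoc (a b c : ℝ) (p : ENNReal) :
    MemLp (fun x => x - c) p (volume.restrict (Ι a b)) :=
  ((Monotone.monotoneOn (fun _ _ h => sub_le_sub_right h c) _).memLp_isCompact
    isCompact_uIcc).mono_measure (Measure.restrict_mono uIoc_subset_uIcc le_rfl)

/-- Theorem 2: Hölder-type Hermite–Hadamard estimate for `|f'|^q` being
`s`-`(α,m)`-convex (first sense), `p > 1`, `q = p/(p-1)`. -/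
theorem hh_s_alpha_m_convex_holder (f f' : ℝ → ℝ) (a b α m s p q c d : ℝ)
    (ha : 0 ≤ a) (hab : a < b)
    (hα : α ∈ Set.Icc (0:ℝ) 1) (hm : m ∈ Set.Ioc (0:ℝ) 1) (hs : s ∈ Set.Ioc (0:ℝ) 1)
    (hp : 1 < p) (hq : q = p / (p - 1))
    (hc : c < a) (hd : b / m < d)
    (hdiff : ∀ x ∈ Set.Ioo c d, HasDerivAt f (f' x) x)
    (hint : IntervalIntegrable f' volume a b)
    (hconv : ∀ x ∈ Set.Icc a b, ∀ y ∈ Set.Icc a b, ∀ t ∈ Set.Icc (0:ℝ) 1,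
      |f' (t * x + (1 - t) * y)| ^ q ≤
        t ^ (α * s) * |f' x| ^ q + m * (1 - t ^ (α * s)) * |f' (y / m)| ^ q) :
    |(f a + f b) / 2 - (1 / (b - a)) * ∫ x in a..b, f x| ≤
      ((b - a) / (2 * (p + 1) ^ (1 / p))) *
        ((|f' a| ^ q + m * (α * s) * |f' (b / m)| ^ q) / (α * s + 1)) ^ (1 / q) := by
  have hpq : p.HolderConjugate q := hq ▸ Real.HolderConjugate.conjExponent hp
  have hr : 0 ≤ α * s := mul_nonneg hα.1 hs.1.le
  have hderiv : ∀ x ∈ [[a, b]], HasDerivAt f (f' x) x := by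
    have hbm : b ≤ b / m := le_div_self (ha.trans hab.le) hm.1 hm.2
    rw [uIcc_of_le hab.le]
    exact fun x hx => hdiff x ⟨hc.trans_le hx.1, (hx.2.trans hbm).trans_lt hd⟩
  have hconv_ab : ∀ t ∈ Icc (0:ℝ) 1, |f' (t * a + (1 - t) * b)| ^ q ≤
      t ^ (α * s) * |f' a| ^ q + (1 - t ^ (α * s)) * (m * |f' (b / m)| ^ q) := fun t ht =>
    (hconv a (left_mem_Icc.2 hab.le) b (right_mem_Icc.2 hab.le) t ht).trans_eq (by ring)
  have hLq : MemLp f' (ENNReal.ofReal q) (volume.restrict (Ι a b)) :=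
    memLp_of_abs_rpow_le_rpow_combination hpq.symm.pos hab.le hr hint hconv_ab _
  rw [one_div, ← smul_eq_mul, ← interval_average_eq,
    trapezoid_sub_interval_average_eq hab.ne hderiv hint]
  refine (abs_average_mul_le_Lp_mul_Lq hpq (memLp_sub_const_restrict_uIoc a b _ _) hLq).trans ?_
  have hkernel : (((b - a) / 2) ^ p / (p + 1)) ^ (1 / p) = (b - a) / (2 * (p + 1) ^ (1 / p)) := by
    rw [Real.div_rpow (by positivity) (by positivity), ← Real.rpow_mul (by linarith),
      mul_one_div_cancel hpq.ne_zero, Real.rpow_one, div_div]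
  rw [interval_average_abs_sub_midpoint_rpow hab (by linarith), hkernel]
  have hq_inv : 0 ≤ 1 / q := one_div_nonneg.2 hpq.symm.nonneg
  gcongr
  · rw [interval_average_eq]
    exact smul_nonneg (by simp [hab.le])
      (intervalIntegral.integral_nonneg hab.le fun x _ => by positivity)
  · refine (interval_average_le_of_le_rpow_combination hab hr
      (intervalIntegrable_abs_rpow_of_memLp hpq.symm.nonneg hLq) hconv_ab).trans_eq ?_
    ring
end

section
/- Let 0 ≤ a < b, let α ∈ [0,1], m ∈ (0,1], s ∈ (0,1], let q > 1 with conjugate exponent p = q/(q−1), and let f : ℝ → ℝ be differentiable on an open interval containing [a, b/m] with f' integrable on [a, b]. If |f'|^q is s-(α,m)-convex, i.e. for all x, y ∈ [a, b] and t ∈ [0,1], |f'(t·x + (1−t)·y)|^q ≤ t^{αs} |f'(x)|^q + m (1 − t^{αs}) |f'(y/m)|^q, then |(f(a)+f(b))/2 − (1/(b−a)) ∫_a^b f(x) dx| ≤ ((b−a) / 2^{(p+1)/p}) · [ v₁ |f'(a)|^q + v₂ |f'(b/m)|^q ]^{1/q}, where v₁ = (1 + 2^{αs}·(αs)) / (2^{αs}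 (αs+1)(αs+2)) and v₂ = m (1/2 − v₁). -/
open MeasureTheory Set

/-!
Integration by parts turns the trapezoid error into `(b - a)⁻¹ ∫ (x - (a + b) / 2) f' x`.
Hölder's inequality for the weight `|x - (a + b) / 2|` bounds this by
`(∫ |x - (a + b) / 2|) ^ (1 / p) * (∫ |x - (a + b) / 2| * |f' x| ^ q) ^ (1 / q)`.
Writing `x = t a + (1 - t) b` with `t = (b - x) / (b - a)`, the convexity hypothesis bounds
`|f' x| ^ q` by `t ^ (α s) |f' a| ^ q + m (1 - t ^ (α s)) |f' (b / m)| ^ q`, and the weighted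
integrals of `1` and of `t ^ (α s)` are computed in closed form.
-/

theorem trapezoid_sub_average_eq {f f' : ℝ → ℝ} {a b : ℝ} (hab : a ≠ b)
    (hf : ∀ x ∈ uIcc a b, HasDerivAt f (f' x) x) (hf' : IntervalIntegrable f' volume a b) :
    (f a + f b) / 2 - 1 / (b - a) * ∫ x in a..b, f x =
      1 / (b - a) * ∫ x in a..b, (x - (a + b) / 2) * f' x := by
  rw [intervalIntegral.integral_mul_deriv_eq_deriv_mul (u := fun x => x - (a + b) / 2)
    (fun x _ => (hasDerivAt_id' x).sub_const _) hf intervalIntegrable_const hf']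
  simp only [one_mul]
  field_simp [sub_ne_zero.2 hab.symm]
  ring

theorem integral_mul_le_weighted_Lp_mul_Lq {α : Type*} [MeasurableSpace α] {μ : Measure α}
    {p q : ℝ} (hpq : p.HolderConjugate q) {w g : α → ℝ} (hw : ∀ x, 0 ≤ w x) (hg : ∀ x, 0 ≤ g x)
    (hw_int : Integrable w μ) (hg_meas : AEStronglyMeasurable g μ)
    (hwg_int : Integrable (fun x => w x * g x ^ q) μ) :
    ∫ x, w x * g x ∂μ ≤ (∫ x, w x ∂μ) ^ (1 / p) * (∫ x, w x * g x ^ q ∂μ) ^ (1 / q) := by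
  have hp := hpq.pos
  have hq := hpq.symm.pos
  have hwp x : (w x ^ (1 / p)) ^ p = w x := by rw [one_div, Real.rpow_inv_rpow (hw x) hp.ne']
  have hwgq x : (w x ^ (1 / q) * g x) ^ q = w x * g x ^ q := by
    rw [Real.mul_rpow (Real.rpow_nonneg (hw x) _) (hg x), one_div,
      Real.rpow_inv_rpow (hw x) hq.ne']
  have hwg x : w x ^ (1 / p) * (w x ^ (1 / q) * g x) = w x * g x := by
    rw [← mul_assoc, ← Real.rpow_add' (hw x) (by simp [hpq.inv_add_inv_eq_one]), one_div, one_div,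
      hpq.inv_add_inv_eq_one, Real.rpow_one]
  have hF : MemLp (fun x => w x ^ (1 / p)) (ENNReal.ofReal p) μ := by
    refine (integrable_norm_rpow_iff ?_ (by simpa using hp) ENNReal.ofReal_ne_top).1 ?_
    · exact (hw_int.aemeasurable.pow_const _).aestronglyMeasurable
    · simpa only [ENNReal.toReal_ofReal hp.le, Real.norm_of_nonneg (Real.rpow_nonneg (hw _) _),
        hwp] using hw_int
  have hG : MemLp (fun x => w x ^ (1 / q) * g x) (ENNReal.ofReal q) μ := by
    refine (integrable_norm_rpow_iff ?_ (by simpa using hq) ENNReal.ofReal_ne_top).1 ?_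
    · exact (hw_int.aemeasurable.pow_const _).aestronglyMeasurable.mul hg_meas
    · simpa only [ENNReal.toReal_ofReal hq.le,
        Real.norm_of_nonneg (mul_nonneg (Real.rpow_nonneg (hw _) _) (hg _)), hwgq] using hwg_int
  simpa only [hwp, hwgq, hwg] using integral_mul_le_Lp_mul_Lq_of_nonneg hpq
    (Filter.Eventually.of_forall fun x => Real.rpow_nonneg (hw x) _)
    (Filter.Eventually.of_forall fun x => mul_nonneg (Real.rpow_nonneg (hw x) _) (hg x)) hF hG

theorem abs_intervalIntegral_mul_le_of_rpow_le {a b p q : ℝ} (hab : a ≤ b)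
    (hpq : p.HolderConjugate q) {k g h : ℝ → ℝ} (hk : Continuous k)
    (hg : AEStronglyMeasurable g (volume.restrict (Ioc a b))) (hh : Continuous h)
    (hgh : ∀ x ∈ Icc a b, |g x| ^ q ≤ h x) :
    |∫ x in a..b, k x * g x| ≤
      (∫ x in a..b, |k x|) ^ (1 / p) * (∫ x in a..b, |k x| * h x) ^ (1 / q) := by
  simp only [intervalIntegral.integral_of_le hab]
  have hgh' : ∀ x ∈ Ioc a b, |k x| * |g x| ^ q ≤ |k x| * h x := fun x hx =>
    mul_le_mul_of_nonneg_left (hgh x (Ioc_subset_Icc_self hx)) (abs_nonneg _)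
  have hkgq : IntegrableOn (fun x => |k x| * |g x| ^ q) (Ioc a b) := by
    refine Integrable.mono' ((hk.abs.mul hh).integrableOn_Ioc)
      (hk.abs.aestronglyMeasurable.mul ((hg.norm.aemeasurable.pow_const _).aestronglyMeasurable)) ?_
    refine (ae_restrict_iff' measurableSet_Ioc).2 (Filter.Eventually.of_forall fun x hx => ?_)
    rw [Real.norm_of_nonneg (by positivity)]
    exact hgh' x hx
  calc |∫ x in Ioc a b, k x * g x|
      ≤ ∫ x in Ioc a b, |k x| * |g x| := by
        simpa only [abs_mul] using abs_integral_le_integral_abs (f := fun x => k x * g x)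
    _ ≤ (∫ x in Ioc a b, |k x|) ^ (1 / p) * (∫ x in Ioc a b, |k x| * |g x| ^ q) ^ (1 / q) :=
        integral_mul_le_weighted_Lp_mul_Lq hpq (fun _ => abs_nonneg _) (fun _ => abs_nonneg _)
          hk.abs.integrableOn_Ioc hg.norm hkgq
    _ ≤ (∫ x in Ioc a b, |k x|) ^ (1 / p) * (∫ x in Ioc a b, |k x| * h x) ^ (1 / q) := by
        gcongr _ * ?_
        exact Real.rpow_le_rpow (integral_nonneg fun _ => by positivity)
          (setIntegral_mono_on hkgq (hk.abs.mul hh).integrableOn_Ioc measurableSet_Ioc hgh')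
          (one_div_nonneg.2 hpq.symm.nonneg)

theorem sub_div_sub_mem_Icc {a b x : ℝ} (hab : a < b) (hx : x ∈ Icc a b) :
    (b - x) / (b - a) ∈ Icc (0 : ℝ) 1 :=
  ⟨div_nonneg (by linarith [hx.2]) (by linarith), (div_le_one (by linarith)).2 (by linarith [hx.1])⟩

theorem sub_div_sub_mul_add_one_sub_mul {a b : ℝ} (hab : a ≠ b) (x : ℝ) :
    (b - x) / (b - a) * a + (1 - (b - x) / (b - a)) * b = x := by
  field_simp [sub_ne_zero.2 hab.symm]
  ring

-- With `r = (b - y) / (b - a)`: `y - (a + b) / 2 = (b - a) (1 / 2 - r)` and `r' = -1 / (b - a)`.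
theorem hasDerivAt_antideriv_sub_midpoint_mul_rpow {a b u x : ℝ} (hab : a < b) (hu : 0 ≤ u)
    (hx : x ≤ b) :
    HasDerivAt (fun y => (b - a) ^ 2 * (((b - y) / (b - a)) ^ (u + 2) / (u + 2)
        - ((b - y) / (b - a)) ^ (u + 1) / (2 * (u + 1))))
      ((x - (a + b) / 2) * ((b - x) / (b - a)) ^ u) x := by
  have hL : b - a ≠ 0 := (sub_pos.2 hab).ne'
  have hr : HasDerivAt (fun y => (b - y) / (b - a)) (-1 / (b - a)) x := by
    simpa using ((hasDerivAt_id x).const_sub b).div_const (b - a)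
  have hr0 : 0 ≤ (b - x) / (b - a) := div_nonneg (sub_nonneg.2 hx) (sub_pos.2 hab).le
  have h1 := (hr.rpow_const (p := u + 1) (Or.inr (by linarith))).div_const (2 * (u + 1))
  have h2 := (hr.rpow_const (p := u + 2) (Or.inr (by linarith))).div_const (u + 2)
  refine ((h2.sub h1).const_mul ((b - a) ^ 2)).congr_deriv ?_
  rw [show u + 2 - 1 = u + 1 by ring, add_sub_cancel_right, Real.rpow_add_one' hr0 (by linarith)]
  field_simp
  ring

theorem integral_abs_sub_midpoint_mul_rpow {a b u : ℝ} (hab : a < b) (hu : 0 ≤ u) :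
    ∫ x in a..b, |x - (a + b) / 2| * ((b - x) / (b - a)) ^ u =
      (b - a) ^ 2 / 2 * ((1 + 2 ^ u * u) / (2 ^ u * (u + 1) * (u + 2))) := by
  set M := (a + b) / 2
  set F := fun y => (b - a) ^ 2 * (((b - y) / (b - a)) ^ (u + 2) / (u + 2)
        - ((b - y) / (b - a)) ^ (u + 1) / (2 * (u + 1)))
  have hcont : Continuous fun x => (x - M) * ((b - x) / (b - a)) ^ u := by
    fun_prop (disch := exact hu)
  have hFTC : ∀ c d, c ≤ d → d ≤ b →
      ∫ x in c..d, (x - M) * ((b - x) / (b - a)) ^ u = F d - F c := fun c d hcd hd =>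
    intervalIntegral.integral_eq_sub_of_hasDerivAt
      (fun x hx => hasDerivAt_antideriv_sub_midpoint_mul_rpow hab hu
        (((uIcc_of_le hcd) ▸ hx).2.trans hd))
      (hcont.intervalIntegrable _ _)
  have haM : a ≤ M := by simp only [M]; linarith
  have hMb : M ≤ b := by simp only [M]; linarith
  have hleft : ∫ x in a..M, |x - M| * ((b - x) / (b - a)) ^ u
      = -∫ x in a..M, (x - M) * ((b - x) / (b - a)) ^ u := by
    rw [← intervalIntegral.integral_neg]
    refine intervalIntegral.integral_congr fun x hx => ?_
    rw [abs_of_nonpos (by linarith [((uIcc_of_le haM) ▸ hx).2])]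
    ring
  have hright : ∫ x in M..b, |x - M| * ((b - x) / (b - a)) ^ u
      = ∫ x in M..b, (x - M) * ((b - x) / (b - a)) ^ u := by
    refine intervalIntegral.integral_congr fun x hx => ?_
    rw [abs_of_nonneg (by linarith [((uIcc_of_le hMb) ▸ hx).1])]
  have hcont_abs : Continuous fun x => |x - M| * ((b - x) / (b - a)) ^ u := by
    fun_prop (disch := exact hu)
  rw [← intervalIntegral.integral_add_adjacent_intervals (b := M) (hcont_abs.intervalIntegrable _ _)
    (hcont_abs.intervalIntegrable _ _), hleft, hright, hFTC a M haM hMb, hFTC M b hMb le_rfl]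
  have hL : b - a ≠ 0 := (sub_pos.2 hab).ne'
  have hrM : (b - M) / (b - a) = 2⁻¹ := by field_simp; ring
  simp only [F, sub_self, zero_div, div_self hL, hrM, Real.one_rpow,
    Real.zero_rpow (show u + 2 ≠ 0 by linarith), Real.zero_rpow (show u + 1 ≠ 0 by linarith),
    Real.inv_rpow zero_le_two, Real.rpow_add two_pos, Real.rpow_two, Real.rpow_one]
  field_simp
  ring

theorem integral_abs_sub_midpoint {a b : ℝ} (hab : a < b) :
    ∫ x in a..b, |x - (a + b) / 2| = (b - a) ^ 2 / 4 := by
  have h := integral_abs_sub_midpoint_mul_rpow hab le_rfl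
  simp only [Real.rpow_zero, mul_one] at h
  rw [h]
  ring

theorem integral_abs_sub_midpoint_mul_interpolation {a b u : ℝ} (hab : a < b) (hu : 0 ≤ u)
    (m A B : ℝ) :
    ∫ x in a..b, |x - (a + b) / 2| *
        (((b - x) / (b - a)) ^ u * A + m * (1 - ((b - x) / (b - a)) ^ u) * B) =
      (b - a) ^ 2 / 2 * ((1 + 2 ^ u * u) / (2 ^ u * (u + 1) * (u + 2)) * A +
        m * (1 / 2 - (1 + 2 ^ u * u) / (2 ^ u * (u + 1) * (u + 2))) * B) := by
  have hsplit : (fun x => |x - (a + b) / 2| *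
      (((b - x) / (b - a)) ^ u * A + m * (1 - ((b - x) / (b - a)) ^ u) * B)) =
      fun x => (A - m * B) * (|x - (a + b) / 2| * ((b - x) / (b - a)) ^ u) +
        m * B * |x - (a + b) / 2| := by
    funext x
    ring
  have hcont : Continuous fun x => |x - (a + b) / 2| * ((b - x) / (b - a)) ^ u := by
    fun_prop (disch := exact hu)
  rw [hsplit, intervalIntegral.integral_add ((hcont.intervalIntegrable _ _).const_mul _)
      ((by fun_prop : Continuous fun x => |x - (a + b) / 2|).intervalIntegrable _ _ |>.const_mul _),
    intervalIntegral.integral_const_mul, intervalIntegral.integral_const_mul,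
    integral_abs_sub_midpoint_mul_rpow hab hu, integral_abs_sub_midpoint hab]
  ring

theorem one_add_two_rpow_mul_div_le_half {u : ℝ} (hu : 0 ≤ u) :
    (1 + 2 ^ u * u) / (2 ^ u * (u + 1) * (u + 2)) ≤ 1 / 2 := by
  have h2u : 1 ≤ (2 : ℝ) ^ u := Real.one_le_rpow one_le_two hu
  rw [div_le_div_iff₀ (by positivity) two_pos]
  nlinarith [mul_nonneg (sub_nonneg.2 h2u) (sq_nonneg u), mul_nonneg (sub_nonneg.2 h2u) hu]

theorem one_div_mul_rpow_mul_rpow_eq {a b p q R : ℝ} (hab : a < b) (hpq : p.HolderConjugate q)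
    (hR : 0 ≤ R) :
    1 / (b - a) * (((b - a) ^ 2 / 4) ^ (1 / p) * ((b - a) ^ 2 / 2 * R) ^ (1 / q)) =
      (b - a) / 2 ^ ((p + 1) / p) * R ^ (1 / q) := by
  have hL : 0 < (b - a) ^ 2 / 2 := by have := sub_pos.2 hab; positivity
  have hsum : 1 / p + 1 / q = 1 := by simpa [one_div] using hpq.inv_add_inv_eq_one
  have hexp : (p + 1) / p = 1 + 1 / p := by field_simp [hpq.ne_zero]
  rw [show (b - a) ^ 2 / 4 = (b - a) ^ 2 / 2 * 2⁻¹ by ring, Real.mul_rpow hL.le (by norm_num),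
    Real.mul_rpow hL.le hR, mul_mul_mul_comm, ← Real.rpow_add hL, hsum, Real.rpow_one, hexp,
    Real.rpow_add two_pos, Real.rpow_one, Real.inv_rpow zero_le_two]
  field_simp

/-- Theorem 3: power-mean-type Hermite–Hadamard estimate for `|f'|^q` being
`s`-`(α,m)`-convex (first sense), `q > 1`, `p = q/(q-1)`. -/
theorem hh_s_alpha_m_convex_power_mean (f f' : ℝ → ℝ) (a b α m s p q c d : ℝ)
    (ha : 0 ≤ a) (hab : a < b)
    (hα : α ∈ Set.Icc (0:ℝ) 1) (hm : m ∈ Set.Ioc (0:ℝ) 1) (hs : s ∈ Set.Ioc (0:ℝ) 1)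
    (hq : 1 < q) (hp : p = q / (q - 1))
    (hc : c < a) (hd : b / m < d)
    (hdiff : ∀ x ∈ Set.Ioo c d, HasDerivAt f (f' x) x)
    (hint : IntervalIntegrable f' volume a b)
    (hconv : ∀ x ∈ Set.Icc a b, ∀ y ∈ Set.Icc a b, ∀ t ∈ Set.Icc (0:ℝ) 1,
      |f' (t * x + (1 - t) * y)| ^ q ≤
        t ^ (α * s) * |f' x| ^ q + m * (1 - t ^ (α * s)) * |f' (y / m)| ^ q) :
    |(f a + f b) / 2 - (1 / (b - a)) * ∫ x in a..b, f x| ≤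
      ((b - a) / 2 ^ ((p + 1) / p)) *
        ((1 + 2 ^ (α * s) * (α * s)) / (2 ^ (α * s) * (α * s + 1) * (α * s + 2))
            * |f' a| ^ q
          + m * (1 / 2 -
              (1 + 2 ^ (α * s) * (α * s)) / (2 ^ (α * s) * (α * s + 1) * (α * s + 2)))
            * |f' (b / m)| ^ q) ^ (1 / q) := by
  have hu : 0 ≤ α * s := mul_nonneg hα.1 hs.1.le
  have hpq : p.HolderConjugate q := hp ▸ (Real.HolderConjugate.conjExponent hq).symm
  have hderiv : ∀ x ∈ uIcc a b, HasDerivAt f (f' x) x := fun x hx => by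
    rw [uIcc_of_le hab.le] at hx
    exact hdiff x ⟨hc.trans_le hx.1,
      hx.2.trans_lt ((le_div_self (ha.trans hab.le) hm.1 hm.2).trans_lt hd)⟩
  have hbound : ∀ x ∈ Icc a b, |f' x| ^ q ≤ ((b - x) / (b - a)) ^ (α * s) * |f' a| ^ q +
      m * (1 - ((b - x) / (b - a)) ^ (α * s)) * |f' (b / m)| ^ q := fun x hx => by
    simpa only [sub_div_sub_mul_add_one_sub_mul hab.ne] using
      hconv a (left_mem_Icc.2 hab.le) b (right_mem_Icc.2 hab.le) _ (sub_div_sub_mem_Icc hab hx)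
  rw [trapezoid_sub_average_eq hab.ne hderiv hint, abs_mul,
    abs_of_pos (one_div_pos.2 (sub_pos.2 hab)), ← one_div_mul_rpow_mul_rpow_eq hab hpq ?hR,
    ← integral_abs_sub_midpoint hab, ← integral_abs_sub_midpoint_mul_interpolation hab hu]
  · gcongr
    exact abs_intervalIntegral_mul_le_of_rpow_le hab.le hpq (by fun_prop)
      hint.1.aestronglyMeasurable (by fun_prop (disch := exact hu)) hbound
  · have := sub_nonneg.2 (one_add_two_rpow_mul_div_le_half hu)
    have := hm.1.le
    positivity
end

section
/- Let 0 ≤ a < b, let α ∈ [0,1], m ∈ (0,1], s ∈ (0,1], let p > 1 and q = p/(p−1), and let f : ℝ → ℝ be differentiable on an open interval containing [a, b/m] with f' integrable on [a, b]. If |f'|^q is s-(α,m)-convex, i.e. for all x, y ∈ [a, b] and t ∈ [0,1], |f'(t·x + (1−t)·y)|^q ≤ t^{αs} |f'(x)|^q + m (1 − t^{αs}) |f'(y/m)|^q, then |(f(a)+f(b))/2 − (1/(b−a)) ∫_a^b f(x) dx| ≤ (b−a) · ( 2 / ((p+1)(p+2)) )^{1/p} · ( ( |f'(a)|^q + m·αs·|f'(b/m)|^q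 ) / (αs + 1) )^{1/q}. -/
/-!
Integration by parts turns the left-hand side into `(b - a)⁻¹ |∫ (x - (a + b) / 2) f' x|`, and
Hölder's inequality bounds this by
`(b - a)⁻¹ (∫ |x - (a + b) / 2| ^ p) ^ (1 / p) (∫ |f'| ^ q) ^ (1 / q)`.
The first integral is `(b - a) ^ (p + 1) / (2 ^ p (p + 1))`. For the second, convexity along the
chord from `a` to `b`, with `x = t a + (1 - t) b`, i.e. `t = (b - x) / (b - a)`, bounds
`|f' x| ^ q` by a function of `t ^ (α s)` whose integral is
`(b - a) (|f' a| ^ q + m α s |f' (b / m)| ^ q) / (α s + 1)`. Bernoulli's inequality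
`1 + p ≤ 2 ^ p` then weakens the constant `1 / (2 ^ p (p + 1))` to `2 / ((p + 1) (p + 2))`.
-/

open MeasureTheory Set intervalIntegral Real

theorem sub_average_eq_integral_sub_midpoint_mul_deriv {f f' : ℝ → ℝ} {a b : ℝ} (hab : a ≠ b)
    (hderiv : ∀ x ∈ uIcc a b, HasDerivAt f (f' x) x) (hint : IntervalIntegrable f' volume a b) :
    (f a + f b) / 2 - 1 / (b - a) * ∫ x in a..b, f x =
      1 / (b - a) * ∫ x in a..b, (x - (a + b) / 2) * f' x := by
  have hid : ∀ x ∈ uIcc a b, HasDerivAt (fun y => y - (a + b) / 2) 1 x := fun x _ =>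
    (hasDerivAt_id x).sub_const _
  rw [integral_mul_deriv_eq_deriv_mul hid hderiv intervalIntegrable_const hint]
  simp only [one_mul]
  field_simp [sub_ne_zero.2 hab.symm]
  ring

theorem integral_abs_sub_midpoint_rpow {a b p : ℝ} (hab : a ≤ b) (hp : 0 ≤ p) :
    ∫ x in a..b, |x - (a + b) / 2| ^ p = (b - a) ^ (p + 1) / (2 ^ p * (p + 1)) := by
  set h := (b - a) / 2
  have hh : 0 ≤ h := by positivity
  have hcont : Continuous fun y : ℝ => |y| ^ p := by fun_prop (disch := exact hp)
  have hhalf : ∫ y in (0:ℝ)..h, |y| ^ p = h ^ (p + 1) / (p + 1) := by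
    rw [integral_congr fun y hy => by
      rw [abs_of_nonneg (uIcc_of_le hh ▸ hy).1], integral_rpow (Or.inl (by linarith)),
      zero_rpow (by linarith), sub_zero]
  have hsym : ∫ y in -h..0, |y| ^ p = ∫ y in (0:ℝ)..h, |y| ^ p := by
    simpa using (integral_comp_neg (a := 0) (b := h) fun y => |y| ^ p).symm
  calc ∫ x in a..b, |x - (a + b) / 2| ^ p = ∫ y in -h..h, |y| ^ p := by
        rw [integral_comp_sub_right (fun y => |y| ^ p)]; congr 1 <;> ring
    _ = 2 * (h ^ (p + 1) / (p + 1)) := by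
        rw [← integral_add_adjacent_intervals (b := 0) (hcont.intervalIntegrable _ _)
          (hcont.intervalIntegrable _ _), hsym, hhalf]; ring
    _ = (b - a) ^ (p + 1) / (2 ^ p * (p + 1)) := by
        rw [div_rpow (by linarith) zero_le_two, rpow_add_one two_ne_zero]
        field_simp

theorem abs_intervalIntegral_mul_le {p q : ℝ} (hpq : p.HolderConjugate q) {a b : ℝ} (hab : a ≤ b)
    {u v : ℝ → ℝ} (hu : IntervalIntegrable u volume a b) (hv : IntervalIntegrable v volume a b)
    (hup : IntervalIntegrable (fun x => |u x| ^ p) volume a b)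
    (hvq : IntervalIntegrable (fun x => |v x| ^ q) volume a b) :
    |∫ x in a..b, u x * v x| ≤
      (∫ x in a..b, |u x| ^ p) ^ (1 / p) * (∫ x in a..b, |v x| ^ q) ^ (1 / q) := by
  have memLp_abs : ∀ {w : ℝ → ℝ} {r : ℝ}, 0 < r → IntervalIntegrable w volume a b →
      IntervalIntegrable (fun x => |w x| ^ r) volume a b →
      MemLp (fun x => |w x|) (ENNReal.ofReal r) (volume.restrict (Ioc a b)) := fun hr hw hwr =>
    ((integrable_norm_rpow_iff hw.aestronglyMeasurable (by simpa using hr) ENNReal.ofReal_ne_top).1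
      (by rw [ENNReal.toReal_ofReal hr.le]; exact hwr.1)).norm
  calc |∫ x in a..b, u x * v x| ≤ ∫ x in Ioc a b, |u x| * |v x| := by
        simpa only [integral_of_le hab, abs_mul] using
          abs_integral_le_integral_abs (f := fun x => u x * v x) hab
    _ ≤ _ := integral_mul_le_Lp_mul_Lq_of_nonneg hpq (.of_forall fun _ => abs_nonneg _)
        (.of_forall fun _ => abs_nonneg _) (memLp_abs hpq.pos hu hup)
        (memLp_abs hpq.symm.pos hv hvq)
    _ = _ := by rw [integral_of_le hab, integral_of_le hab]

section ChordBound

variable {g : ℝ → ℝ} {a b r A B : ℝ}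

theorem integral_sub_div_sub_rpow (hab : a ≠ b) (hr : -1 < r) :
    ∫ x in a..b, ((b - x) / (b - a)) ^ r = (b - a) / (r + 1) := by
  have hba : b - a ≠ 0 := sub_ne_zero.2 hab.symm
  rw [integral_comp_sub_left (fun y => (y / (b - a)) ^ r), sub_self,
    integral_comp_div (fun y => y ^ r) hba, zero_div, div_self hba, integral_rpow (Or.inl hr),
    one_rpow, zero_rpow (by linarith), smul_eq_mul]
  ring

theorem le_of_chord_le (hab : a < b)
    (hchord : ∀ t ∈ Icc (0:ℝ) 1, g (t * a + (1 - t) * b) ≤ t ^ r * A + (1 - t ^ r) * B)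
    {x : ℝ} (hx : x ∈ Icc a b) :
    g x ≤ ((b - x) / (b - a)) ^ r * A + (1 - ((b - x) / (b - a)) ^ r) * B := by
  have hba : 0 < b - a := sub_pos.2 hab
  have ht : (b - x) / (b - a) ∈ Icc (0:ℝ) 1 :=
    ⟨div_nonneg (by linarith [hx.2]) hba.le, (div_le_one hba).2 (by linarith [hx.1])⟩
  convert hchord _ ht using 2
  field_simp
  ring

theorem continuous_chord_majorant (hr : 0 ≤ r) :
    Continuous fun x => ((b - x) / (b - a)) ^ r * A + (1 - ((b - x) / (b - a)) ^ r) * B := by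
  fun_prop (disch := exact hr)

theorem intervalIntegrable_of_chord_le (hab : a < b) (hr : 0 ≤ r) (hg0 : ∀ x, 0 ≤ g x)
    (hgm : AEStronglyMeasurable g (volume.restrict (Ioc a b)))
    (hchord : ∀ t ∈ Icc (0:ℝ) 1, g (t * a + (1 - t) * b) ≤ t ^ r * A + (1 - t ^ r) * B) :
    IntervalIntegrable g volume a b := by
  refine ((continuous_chord_majorant (a := a) (b := b) (A := A) (B := B) hr).intervalIntegrable
    a b).mono_fun' (by rwa [uIoc_of_le hab.le]) ?_
  rw [uIoc_of_le hab.le, Filter.EventuallyLE, ae_restrict_iff' measurableSet_Ioc]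
  exact .of_forall fun x hx => by
    simpa only [norm_of_nonneg (hg0 x)] using le_of_chord_le hab hchord (Ioc_subset_Icc_self hx)

theorem integral_le_of_chord_le (hab : a < b) (hr : 0 ≤ r) (hg : IntervalIntegrable g volume a b)
    (hchord : ∀ t ∈ Icc (0:ℝ) 1, g (t * a + (1 - t) * b) ≤ t ^ r * A + (1 - t ^ r) * B) :
    ∫ x in a..b, g x ≤ (b - a) * ((A + r * B) / (r + 1)) := by
  have hweight : IntervalIntegrable (fun x => ((b - x) / (b - a)) ^ r) volume a b :=
    (by fun_prop (disch := exact hr) : Continuous _).intervalIntegrable a b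
  calc ∫ x in a..b, g x
      ≤ ∫ x in a..b, ((b - x) / (b - a)) ^ r * A + (1 - ((b - x) / (b - a)) ^ r) * B :=
        integral_mono_on hab.le hg ((continuous_chord_majorant hr).intervalIntegrable a b)
          fun x hx => le_of_chord_le hab hchord hx
    _ = (b - a) * ((A + r * B) / (r + 1)) := by
        simp_rw [show ∀ w : ℝ, w * A + (1 - w) * B = (A - B) * w + B by intros; ring]
        rw [integral_add (hweight.const_mul _) intervalIntegrable_const,
          intervalIntegral.integral_const_mul, integral_sub_div_sub_rpow hab.ne (by linarith),
          intervalIntegral.integral_const, smul_eq_mul]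
        field_simp
        ring

end ChordBound

theorem one_div_mul_rpow_mul_rpow_eq_s6 {p q D E I : ℝ} (hpq : p.HolderConjugate q) (hD : 0 < D)
    (hE : 0 ≤ E) (hI : 0 ≤ I) :
    1 / D * ((D ^ (p + 1) / E) ^ (1 / p) * I ^ (1 / q)) =
      D * (1 / E) ^ (1 / p) * (I / D) ^ (1 / q) := by
  obtain ⟨K, hK, rfl⟩ : ∃ K, 0 ≤ K ∧ I = D * K := ⟨I / D, div_nonneg hI hD.le, by field_simp⟩
  have hexp : (p + 1) * (1 / p) + 1 / q = 1 + 1 := by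
    rw [show (p + 1) * (1 / p) = 1 + 1 / p by field_simp [hpq.ne_zero]]
    linarith [hpq.one_div_add_one_div]
  rw [mul_div_cancel_left₀ _ hD.ne', div_eq_mul_one_div (D ^ (p + 1)),
    mul_rpow (by positivity) (by positivity), mul_rpow hD.le hK, ← rpow_mul hD.le]
  calc 1 / D * (D ^ ((p + 1) * (1 / p)) * (1 / E) ^ (1 / p) * (D ^ (1 / q) * K ^ (1 / q)))
      = 1 / D * D ^ ((p + 1) * (1 / p) + 1 / q) * (1 / E) ^ (1 / p) * K ^ (1 / q) := by
        rw [rpow_add hD]; ring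
    _ = D * (1 / E) ^ (1 / p) * K ^ (1 / q) := by
        rw [hexp, rpow_add hD, rpow_one]; field_simp

theorem abs_sub_average_le_of_holderConjugate {f f' : ℝ → ℝ} {a b p q : ℝ}
    (hpq : p.HolderConjugate q) (hab : a < b) (hderiv : ∀ x ∈ uIcc a b, HasDerivAt f (f' x) x)
    (hint : IntervalIntegrable f' volume a b)
    (hintq : IntervalIntegrable (fun x => |f' x| ^ q) volume a b) :
    |(f a + f b) / 2 - 1 / (b - a) * ∫ x in a..b, f x| ≤
      (b - a) * (1 / (2 ^ p * (p + 1))) ^ (1 / p) *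
        ((∫ x in a..b, |f' x| ^ q) / (b - a)) ^ (1 / q) := by
  have hba : 0 < b - a := sub_pos.2 hab
  have hmid : IntervalIntegrable (fun x => |x - (a + b) / 2| ^ p) volume a b :=
    (by fun_prop (disch := exact hpq.nonneg) : Continuous _).intervalIntegrable a b
  calc |(f a + f b) / 2 - 1 / (b - a) * ∫ x in a..b, f x|
      = 1 / (b - a) * |∫ x in a..b, (x - (a + b) / 2) * f' x| := by
        rw [sub_average_eq_integral_sub_midpoint_mul_deriv hab.ne hderiv hint, abs_mul,
          abs_of_pos (one_div_pos.2 hba)]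
    _ ≤ 1 / (b - a) * ((∫ x in a..b, |x - (a + b) / 2| ^ p) ^ (1 / p) *
          (∫ x in a..b, |f' x| ^ q) ^ (1 / q)) := by
        gcongr
        exact abs_intervalIntegral_mul_le hpq hab.le
          ((continuous_sub_right _).intervalIntegrable a b) hint hmid hintq
    _ = _ := by
        rw [integral_abs_sub_midpoint_rpow hab.le hpq.nonneg, one_div_mul_rpow_mul_rpow_eq_s6 hpq hba
          (by have := hpq.pos; positivity) (integral_nonneg hab.le fun x _ => by positivity)]

theorem one_div_two_rpow_mul_le {p : ℝ} (hp : 1 ≤ p) :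
    1 / (2 ^ p * (p + 1)) ≤ 2 / ((p + 1) * (p + 2)) := by
  have hbernoulli : 1 + p ≤ (2:ℝ) ^ p := by
    simpa [one_add_one_eq_two] using one_add_mul_self_le_rpow_one_add (s := 1) (by norm_num) hp
  rw [div_le_div_iff₀ (by positivity) (by positivity)]
  nlinarith

/-- Theorem 5: Hölder-type double-integral Hermite–Hadamard estimate for `|f'|^q`
being `s`-`(α,m)`-convex (first sense), `p > 1`, `q = p/(p-1)`. -/
theorem hh_s_alpha_m_convex_holder_double (f f' : ℝ → ℝ) (a b α m s p q c d : ℝ)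
    (ha : 0 ≤ a) (hab : a < b)
    (hα : α ∈ Set.Icc (0:ℝ) 1) (hm : m ∈ Set.Ioc (0:ℝ) 1) (hs : s ∈ Set.Ioc (0:ℝ) 1)
    (hp : 1 < p) (hq : q = p / (p - 1))
    (hc : c < a) (hd : b / m < d)
    (hdiff : ∀ x ∈ Set.Ioo c d, HasDerivAt f (f' x) x)
    (hint : IntervalIntegrable f' volume a b)
    (hconv : ∀ x ∈ Set.Icc a b, ∀ y ∈ Set.Icc a b, ∀ t ∈ Set.Icc (0:ℝ) 1,
      |f' (t * x + (1 - t) * y)| ^ q ≤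
        t ^ (α * s) * |f' x| ^ q + m * (1 - t ^ (α * s)) * |f' (y / m)| ^ q) :
    |(f a + f b) / 2 - (1 / (b - a)) * ∫ x in a..b, f x| ≤
      (b - a) * (2 / ((p + 1) * (p + 2))) ^ (1 / p) *
        ((|f' a| ^ q + m * (α * s) * |f' (b / m)| ^ q) / (α * s + 1)) ^ (1 / q) := by
  have hpq : p.HolderConjugate q := hq ▸ HolderConjugate.conjExponent hp
  have hq0 : 0 < q := hpq.symm.pos
  have hr : 0 ≤ α * s := mul_nonneg hα.1 hs.1.le
  have hb : b ≤ b / m := le_div_self (by linarith) hm.1 hm.2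
  have hderiv : ∀ x ∈ uIcc a b, HasDerivAt f (f' x) x := fun x hx => hdiff x
    ⟨hc.trans_le (uIcc_of_le hab.le ▸ hx).1, ((uIcc_of_le hab.le ▸ hx).2.trans hb).trans_lt hd⟩
  have hchord : ∀ t ∈ Icc (0:ℝ) 1, |f' (t * a + (1 - t) * b)| ^ q ≤
      t ^ (α * s) * |f' a| ^ q + (1 - t ^ (α * s)) * (m * |f' (b / m)| ^ q) := fun t ht =>
    (hconv a ⟨le_rfl, hab.le⟩ b ⟨hab.le, le_rfl⟩ t ht).trans_eq (by ring)
  have hintq : IntervalIntegrable (fun x => |f' x| ^ q) volume a b :=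
    intervalIntegrable_of_chord_le hab hr (fun x => by positivity)
      (by have := hint.aestronglyMeasurable; fun_prop (disch := exact hpq.symm.nonneg)) hchord
  have hmean : (∫ x in a..b, |f' x| ^ q) / (b - a) ≤
      (|f' a| ^ q + m * (α * s) * |f' (b / m)| ^ q) / (α * s + 1) := by
    rw [div_le_iff₀' (sub_pos.2 hab)]
    exact (integral_le_of_chord_le hab hr hintq hchord).trans_eq (by ring)
  have hmean0 : 0 ≤ (∫ x in a..b, |f' x| ^ q) / (b - a) :=
    div_nonneg (integral_nonneg hab.le fun x _ => by positivity) (sub_pos.2 hab).le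
  refine (abs_sub_average_le_of_holderConjugate hpq hab hderiv hint hintq).trans ?_
  gcongr _ * ?_ ^ _ * ?_ ^ _
  exact one_div_two_rpow_mul_le hp.le
end

section
/- Let 0 < a < b, let p > 1 and q = p/(p−1). Then |(a + b)/2 − (b − a)/(ln b − ln a)| ≤ ((ln b − ln a) / (2 (p+1)^{1/p})) · ( (a^q + b^q)/2 )^{1/q}. Equivalently, |A(a,b) − L(a,b)| ≤ ((ln b − ln a)/(2(p+1)^{1/p})) · A(a^q, b^q)^{1/q}. -/
lemma sinh_le_mul_cosh {x : ℝ} (hx : 0 ≤ x) : Real.sinh x ≤ x * Real.cosh x := by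
  have mono : MonotoneOn (fun y => y * Real.cosh y - Real.sinh y) (Set.Ici 0) := by
    apply monotoneOn_of_deriv_nonneg (convex_Ici 0)
    · fun_prop
    · apply Differentiable.differentiableOn
      fun_prop
    · intro y hy
      rw [interior_Ici] at hy
      have hd : HasDerivAt (fun y => y * Real.cosh y - Real.sinh y)
          (1 * Real.cosh y + y * Real.sinh y - Real.cosh y) y :=
        ((hasDerivAt_id y).mul (Real.hasDerivAt_cosh y)).sub (Real.hasDerivAt_sinh y)
      rw [hd.deriv]
      have h1 : 0 ≤ Real.sinh y := by
        rw [Real.sinh_nonneg_iff]; exact (le_of_lt hy)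
      nlinarith [mul_nonneg (le_of_lt hy) h1]
  have h0 := mono (Set.self_mem_Ici) hx hx
  simp only [Real.sinh_zero, Real.cosh_zero, mul_one, zero_mul, sub_zero, zero_sub,
    neg_zero] at h0
  linarith

lemma exp_sub_one_le_half_mul {h : ℝ} (hh : 0 ≤ h) :
    Real.exp h - 1 ≤ h / 2 * (Real.exp h + 1) := by
  have hs := sinh_le_mul_cosh (by linarith : (0:ℝ) ≤ h / 2)
  rw [Real.sinh_eq, Real.cosh_eq] at hs
  have e1 : Real.exp (h/2) * Real.exp (h/2) = Real.exp h := by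
    rw [← Real.exp_add]; norm_num
  have e2 : Real.exp (h/2) * Real.exp (-(h/2)) = 1 := by
    rw [← Real.exp_add]; norm_num
  nlinarith [Real.exp_pos (h/2), hh,
    mul_le_mul_of_nonneg_left hs (Real.exp_pos (h/2)).le]

/-- Proposition 1: for `0 < a < b`, `p > 1`, `q = p/(p-1)`,
`|A(a,b) − L(a,b)| ≤ ((ln b − ln a)/(2(p+1)^{1/p})) · A(a^q, b^q)^{1/q}`. -/
theorem arith_log_mean_estimate (a b p q : ℝ) (ha : 0 < a) (hab : a < b)
    (hp : 1 < p) (hq : q = p / (p - 1)) :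
    |(a + b) / 2 - (b - a) / (Real.log b - Real.log a)| ≤
      ((Real.log b - Real.log a) / (2 * (p + 1) ^ (1 / p))) *
        ((a ^ q + b ^ q) / 2) ^ (1 / q) := by
  have hb : 0 < b := ha.trans hab
  obtain ⟨h, hhdef⟩ : ∃ h : ℝ, Real.log b - Real.log a = h := ⟨_, rfl⟩
  have hh : 0 < h := hhdef ▸ sub_pos.2 (Real.log_lt_log ha hab)
  have hquart : 1 + h + h^2/2 + h^3/6 + h^4/24 ≤ Real.exp h := by
    have := Real.sum_le_exp_of_nonneg hh.le 5
    rw [Finset.sum_range_succ, Finset.sum_range_succ, Finset.sum_range_succ,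
      Finset.sum_range_succ, Finset.sum_range_succ] at this
    norm_num [Nat.factorial] at this
    linarith
  have hLA : Real.exp h - 1 ≤ h / 2 * (Real.exp h + 1) := exp_sub_one_le_half_mul hh.le
  have hbE : b = a * Real.exp h := by
    rw [← hhdef, Real.exp_sub, Real.exp_log ha, Real.exp_log hb]
    field_simp
  obtain ⟨E, hE⟩ : ∃ E : ℝ, Real.exp h = E := ⟨_, rfl⟩
  rw [hE] at hquart hLA hbE
  -- q facts
  have hp1 : 0 < p - 1 := by linarith
  have hq1 : 1 < q := by
    rw [hq, lt_div_iff₀ hp1]; linarith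
  have hq0 : 0 < q := by linarith
  have hA0 : (0:ℝ) ≤ (a + b) / 2 := by positivity
  -- power mean: A ≤ M
  have keyM : (a + b) / 2 ≤ ((a ^ q + b ^ q) / 2) ^ (1 / q) := by
    have hconv := (convexOn_rpow hq1.le).2 (Set.mem_Ici.2 ha.le) (Set.mem_Ici.2 hb.le)
      (by norm_num : (0:ℝ) ≤ 1/2) (by norm_num : (0:ℝ) ≤ 1/2) (by norm_num)
    simp only [smul_eq_mul] at hconv
    have h1 : ((a + b) / 2) ^ q ≤ (a ^ q + b ^ q) / 2 := by
      calc ((a + b) / 2) ^ q = (1/2 * a + 1/2 * b) ^ q := by ring_nf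
        _ ≤ 1/2 * a ^ q + 1/2 * b ^ q := hconv
        _ = (a ^ q + b ^ q) / 2 := by ring
    calc (a + b) / 2 = (((a + b) / 2) ^ q) ^ (1/q) := by
          rw [← Real.rpow_mul hA0, mul_one_div_cancel hq0.ne', Real.rpow_one]
      _ ≤ ((a ^ q + b ^ q) / 2) ^ (1/q) :=
          Real.rpow_le_rpow (Real.rpow_nonneg hA0 q) h1 (by positivity)
  -- Bernoulli: (p+1)^(1/p) ≤ 2
  have hc0 : (0:ℝ) < (p + 1) ^ (1 / p) := Real.rpow_pos_of_pos (by linarith) _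
  have hc2 : (p + 1) ^ (1 / p) ≤ 2 := by
    have hber : p + 1 ≤ 2 ^ p := by
      have := one_add_mul_self_le_rpow_one_add (by norm_num : (-1:ℝ) ≤ 1) hp.le
      norm_num at this
      linarith
    calc (p + 1) ^ (1/p) ≤ (2 ^ p) ^ (1/p) :=
          Real.rpow_le_rpow (by linarith) hber (by positivity)
      _ = 2 := by
          rw [← Real.rpow_mul (by norm_num), mul_one_div_cancel (by linarith : p ≠ 0),
            Real.rpow_one]
  -- main bound |A − L| ≤ (h/4) A
  have main : |(a + b) / 2 - (b - a) / h| ≤ h / 4 * ((a + b) / 2) := by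
    rw [abs_le]
    constructor
    · have hL : (b - a) / h ≤ (a + b) / 2 := by
        rw [div_le_iff₀ hh, hbE]
        nlinarith [mul_le_mul_of_nonneg_left hLA ha.le]
      nlinarith [mul_nonneg hh.le hA0]
    · have hpsi : 0 ≤ h^2 * (1 + E) / 8 - h * (1 + E) / 2 + (E - 1) := by
        nlinarith [mul_nonneg (show (0:ℝ) ≤ h^2/8 - h/2 + 1 by nlinarith [sq_nonneg (h-2)])
          (sub_nonneg.2 hquart), pow_pos hh 3, pow_pos hh 2, pow_pos hh 4, pow_pos hh 6]
      have step : (a + b) / 2 - h / 4 * ((a + b) / 2) ≤ (b - a) / h := by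
        rw [le_div_iff₀ hh, hbE]
        nlinarith [mul_nonneg ha.le hpsi]
      linarith
  rw [hhdef]
  calc |(a + b) / 2 - (b - a) / h| ≤ h / 4 * ((a + b) / 2) := main
    _ ≤ h / (2 * (p + 1) ^ (1 / p)) * ((a ^ q + b ^ q) / 2) ^ (1 / q) := by
        apply mul_le_mul _ keyM hA0 _
        · rw [div_le_div_iff₀ (by norm_num) (by positivity)]
          nlinarith
        · positivity
end

section
/- Let 0 < a < b and let q > 1. Then ln( I(a,b) / G(a,b) ) ≤ ((b − a)/2) · H(a^q, b^q)^{−1/q}, i.e. I(a,b)/G(a,b) ≤ exp( ((b−a)/2) · ( (a^q + b^q) / (2 a^q b^q) )^{1/q} ). -/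
/-!
Writing `m = (a + b) / 2`, the inequality `log x ≤ x - 1` at `b / m` and at `m / a` gives
`log b - log a ≤ (b - a) / (a + b) + (b - a) / (2 a)`. Since
`log (I / G) = (a + b) / (2 (b - a)) · (log b - log a) - 1`, this yields
`log (I / G) ≤ (b - a) / (4 a)`. Finally `H(a^q, b^q) ≤ 2 a^q ≤ (2 a)^q` for `q ≥ 1`, so
`H(a^q, b^q)^(-1/q) ≥ 1 / (2 a)`.
-/

open Real

noncomputable section

def identricMean (a b : ℝ) : ℝ := (1 / exp 1) * (b ^ b / a ^ a) ^ (1 / (b - a))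

def harmonicMean (x y : ℝ) : ℝ := 2 * x * y / (x + y)

theorem log_identricMean {a b : ℝ} (ha : 0 < a) (hb : 0 < b) :
    log (identricMean a b) = (b * log b - a * log a) / (b - a) - 1 := by
  rw [identricMean, one_div, log_mul (by positivity) (by positivity), log_inv, log_exp,
    log_rpow (by positivity), log_div (by positivity) (by positivity), log_rpow hb, log_rpow ha]
  ring

theorem log_identricMean_div_sqrt {a b : ℝ} (ha : 0 < a) (hb : 0 < b) (hab : a ≠ b) :
    log (identricMean a b / √(a * b)) = (a + b) / (2 * (b - a)) * (log b - log a) - 1 := by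
  have hba : b - a ≠ 0 := sub_ne_zero.mpr hab.symm
  have hI : identricMean a b ≠ 0 := by unfold identricMean; positivity
  rw [log_div hI (by positivity), log_identricMean ha hb, log_sqrt (by positivity),
    log_mul ha.ne' hb.ne']
  field_simp
  ring

theorem log_sub_log_le_of_midpoint {a b : ℝ} (ha : 0 < a) (hb : 0 < b) :
    log b - log a ≤ (b - a) / (a + b) + (b - a) / (2 * a) := by
  have hm : 0 < (a + b) / 2 := by positivity
  have hupper := log_le_sub_one_of_pos (div_pos hb hm)
  have hlower := log_le_sub_one_of_pos (div_pos hm ha)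
  rw [log_div hb.ne' hm.ne'] at hupper
  rw [log_div hm.ne' ha.ne'] at hlower
  calc log b - log a ≤ (b / ((a + b) / 2) - 1) + ((a + b) / 2 / a - 1) := by linarith
    _ = (b - a) / (a + b) + (b - a) / (2 * a) := by field_simp; ring

theorem log_identricMean_div_sqrt_le {a b : ℝ} (ha : 0 < a) (hab : a < b) :
    log (identricMean a b / √(a * b)) ≤ (b - a) / (4 * a) := by
  have hb : 0 < b := ha.trans hab
  have hba : 0 < b - a := sub_pos.mpr hab
  rw [log_identricMean_div_sqrt ha hb hab.ne]
  calc (a + b) / (2 * (b - a)) * (log b - log a) - 1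
      ≤ (a + b) / (2 * (b - a)) * ((b - a) / (a + b) + (b - a) / (2 * a)) - 1 := by
        gcongr
        exact log_sub_log_le_of_midpoint ha hb
    _ = (b - a) / (4 * a) := by field_simp; ring

theorem harmonicMean_le_two_mul_left {x y : ℝ} (hx : 0 < x) (hy : 0 ≤ y) :
    harmonicMean x y ≤ 2 * x := by
  rw [harmonicMean, div_le_iff₀ (by positivity)]
  nlinarith

theorem inv_two_mul_le_harmonicMean_rpow_neg {a b q : ℝ} (ha : 0 < a) (hb : 0 < b)
    (hq : 1 ≤ q) :
    (2 * a)⁻¹ ≤ harmonicMean (a ^ q) (b ^ q) ^ (-(1 / q)) := by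
  have hq0 : q ≠ 0 := by positivity
  have hH : 0 < harmonicMean (a ^ q) (b ^ q) := by unfold harmonicMean; positivity
  have hH_le : harmonicMean (a ^ q) (b ^ q) ≤ (2 * a) ^ q :=
    calc harmonicMean (a ^ q) (b ^ q) ≤ 2 * a ^ q :=
          harmonicMean_le_two_mul_left (by positivity) (by positivity)
      _ ≤ 2 ^ q * a ^ q := by gcongr; exact self_le_rpow_of_one_le one_le_two hq
      _ = (2 * a) ^ q := (mul_rpow zero_le_two ha.le).symm
  calc (2 * a)⁻¹ = ((2 * a) ^ q) ^ (-(1 / q)) := by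
        rw [← rpow_mul (by positivity), mul_neg, mul_one_div_cancel hq0, rpow_neg_one]
    _ ≤ harmonicMean (a ^ q) (b ^ q) ^ (-(1 / q)) :=
        rpow_le_rpow_of_nonpos hH hH_le (by simp only [one_div, neg_nonpos]; positivity)

end

/-- Proposition 2: for `0 < a < b` and `q > 1`,
`ln (I(a,b) / G(a,b)) ≤ ((b−a)/2) · H(a^q, b^q)^{−1/q}`, where
`I(a,b) = (1/e)(b^b/a^a)^{1/(b−a)}`, `G(a,b) = √(ab)` and `H(x,y) = 2xy/(x+y)`. -/
theorem identric_over_geometric_estimate (a b q : ℝ) (ha : 0 < a) (hab : a < b)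
    (hq : 1 < q) :
    Real.log ((1 / Real.exp 1) * (b ^ b / a ^ a) ^ (1 / (b - a)) / Real.sqrt (a * b)) ≤
      ((b - a) / 2) * (2 * a ^ q * b ^ q / (a ^ q + b ^ q)) ^ (-(1 / q)) :=
  calc log (identricMean a b / √(a * b)) ≤ (b - a) / (4 * a) :=
        log_identricMean_div_sqrt_le ha hab
    _ = (b - a) / 2 * (2 * a)⁻¹ := by field_simp; ring
    _ ≤ (b - a) / 2 * harmonicMean (a ^ q) (b ^ q) ^ (-(1 / q)) :=
        mul_le_mul_of_nonneg_left (inv_two_mul_le_harmonicMean_rpow_neg ha (ha.trans hab) hq.le)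
          (by linarith)
end

section
/- Let n be an integer with |n| ≥ 2, let 0 < a < b, let p > 1 and q = p/(p−1). Then | (a^n + b^n)/2 − (b^{n+1} − a^{n+1}) / ((n+1)(b − a)) | ≤ |n| · ((b − a)/3) · ( (a^{q(n−1)} + b^{q(n−1)})/2 )^{1/q}. Equivalently, |A(a^n, b^n) − L_n(a,b)^n| ≤ |n| ((b−a)/3) A(a^{q(n−1)}, b^{q(n−1)})^{1/q}. -/
/-!
Integration by parts gives `(b - a) (f a + f b) / 2 - ∫ f = ∫ (t - (a + b) / 2) f'(t) dt`.
For `f t = tⁿ` the function `|f'| = |n| tⁿ⁻¹` is convex on `(0, ∞)`, so it lies below its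
chord on `[a, b]`; integrating `|t - (a + b) / 2|` against the chord bounds the error by
`|n| (b - a) / 4 · A(aⁿ⁻¹, bⁿ⁻¹)`. Since `1/4 < 1/3` and the arithmetic mean is at most the
power mean of order `q ≥ 1`, the claim follows.
-/

open Set intervalIntegral
open MeasureTheory (volume)
open scoped Interval

theorem ConvexOn.mul_le_chord {f : ℝ → ℝ} {a b t : ℝ} (hf : ConvexOn ℝ (Icc a b) f)
    (ht : t ∈ Icc a b) : (b - a) * f t ≤ (b - t) * f a + (t - a) * f b := by
  obtain ⟨hat, htb⟩ := ht
  rcases hat.eq_or_lt with rfl | hat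
  · simp
  have hab : 0 < b - a := by linarith
  have h := hf.2 (left_mem_Icc.2 (hat.le.trans htb)) (right_mem_Icc.2 (hat.le.trans htb))
    (div_nonneg (sub_nonneg.2 htb) hab.le : 0 ≤ (b - t) / (b - a))
    (div_nonneg (sub_nonneg.2 hat.le) hab.le : 0 ≤ (t - a) / (b - a))
    (by field_simp; ring)
  have ht : (b - t) / (b - a) * a + (t - a) / (b - a) * b = t := by
    field_simp; ring
  simp only [smul_eq_mul, ht] at h
  calc (b - a) * f t ≤ (b - a) * ((b - t) / (b - a) * f a + (t - a) / (b - a) * f b) := by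
        gcongr
    _ = (b - t) * f a + (t - a) * f b := by field_simp

theorem integral_sub_mul_affine (u v c α β : ℝ) :
    ∫ t in u..v, (t - c) * (α * t + β) =
      α * (v ^ 3 - u ^ 3) / 3 + (β - c * α) * (v ^ 2 - u ^ 2) / 2 - c * β * (v - u) := by
  have hexpand : (fun t : ℝ => (t - c) * (α * t + β)) =
      fun t => α * t ^ 2 + ((β - c * α) * t - c * β) := by
    funext t; ring
  rw [hexpand, intervalIntegral.integral_add, intervalIntegral.integral_sub, integral_const_mul,
    integral_const_mul, integral_pow, integral_id]
  · simp only [Nat.reduceAdd, Nat.cast_ofNat, intervalIntegral.integral_const, smul_eq_mul]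
    ring
  all_goals exact Continuous.intervalIntegrable (by fun_prop) _ _

theorem integral_abs_sub_midpoint_mul_chord {a b : ℝ} (hab : a ≤ b) (A B : ℝ) :
    ∫ t in a..b, |t - (a + b) / 2| * ((b - t) * A + (t - a) * B) = (b - a) ^ 3 * (A + B) / 8 := by
  set m := (a + b) / 2 with hm
  have hchord (t : ℝ) : (b - t) * A + (t - a) * B = (B - A) * t + (b * A - a * B) := by ring
  have hleft : EqOn (fun t => |t - m| * ((b - t) * A + (t - a) * B))
      (fun t => -((t - m) * ((B - A) * t + (b * A - a * B)))) [[a, m]] := by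
    intro t ht
    rw [uIcc_of_le (by linarith [hm]), mem_Icc] at ht
    simp only [abs_of_nonpos (sub_nonpos.2 ht.2), hchord]; ring
  have hright : EqOn (fun t => |t - m| * ((b - t) * A + (t - a) * B))
      (fun t => (t - m) * ((B - A) * t + (b * A - a * B))) [[m, b]] := by
    intro t ht
    rw [uIcc_of_le (by linarith [hm]), mem_Icc] at ht
    simp only [abs_of_nonneg (sub_nonneg.2 ht.1), hchord]
  have hint (u v : ℝ) : IntervalIntegrable (fun t => |t - m| * ((b - t) * A + (t - a) * B))
      volume u v := Continuous.intervalIntegrable (by fun_prop) _ _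
  rw [← integral_add_adjacent_intervals (hint a m) (hint m b), integral_congr hleft,
    integral_congr hright, integral_neg, integral_sub_mul_affine, integral_sub_mul_affine]
  ring

theorem integral_sub_midpoint_mul_deriv {f f' : ℝ → ℝ} {a b : ℝ}
    (hf : ∀ t ∈ [[a, b]], HasDerivAt f (f' t) t) (hf' : IntervalIntegrable f' volume a b) :
    ∫ t in a..b, (t - (a + b) / 2) * f' t = (b - a) * ((f a + f b) / 2) - ∫ t in a..b, f t := by
  rw [integral_mul_deriv_eq_deriv_mul (u := fun t => t - (a + b) / 2)
    (fun t _ => (hasDerivAt_id t).sub_const _) hf intervalIntegrable_const hf']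
  simp only [one_mul]
  ring

theorem abs_trapezoid_sub_average_le {f f' : ℝ → ℝ} {a b : ℝ} (hab : a < b)
    (hf : ∀ t ∈ Icc a b, HasDerivAt f (f' t) t) (hf' : ContinuousOn f' (Icc a b))
    (hconv : ConvexOn ℝ (Icc a b) fun t => |f' t|) :
    |(f a + f b) / 2 - (b - a)⁻¹ * ∫ t in a..b, f t| ≤ (b - a) * (|f' a| + |f' b|) / 8 := by
  have hba : 0 < b - a := sub_pos.2 hab
  rw [← uIcc_of_le hab.le] at hf
  have hbound : (b - a) * |∫ t in a..b, (t - (a + b) / 2) * f' t| ≤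
      ∫ t in a..b, |t - (a + b) / 2| * ((b - t) * |f' a| + (t - a) * |f' b|) := by
    rw [← abs_of_pos hba, ← abs_mul, ← integral_const_mul]
    refine (Real.norm_eq_abs _).ge.trans
      (norm_integral_le_of_norm_le hab.le (Filter.Eventually.of_forall fun t ht => ?_) ?_)
    · rw [Real.norm_eq_abs, abs_mul, abs_of_pos hba, abs_mul, mul_left_comm]
      exact mul_le_mul_of_nonneg_left (hconv.mul_le_chord (Ioc_subset_Icc_self ht)) (abs_nonneg _)
    · exact Continuous.intervalIntegrable (by fun_prop) _ _
  rw [integral_sub_midpoint_mul_deriv hf (hf'.intervalIntegrable_of_Icc hab.le),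
    integral_abs_sub_midpoint_mul_chord hab.le] at hbound
  have hscale : (b - a) * ((f a + f b) / 2) - ∫ t in a..b, f t =
      (b - a) * ((f a + f b) / 2 - (b - a)⁻¹ * ∫ t in a..b, f t) := by
    field_simp
  rw [hscale, abs_mul, abs_of_pos hba] at hbound
  refine le_of_mul_le_mul_left ?_ (pow_pos hba 2)
  calc (b - a) ^ 2 * _ = (b - a) * ((b - a) * _) := by ring
    _ ≤ _ := hbound
    _ = _ := by ring

theorem add_div_two_le_rpow_mean {x y q : ℝ} (hx : 0 ≤ x) (hy : 0 ≤ y) (hq : 1 ≤ q) :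
    (x + y) / 2 ≤ ((x ^ q + y ^ q) / 2) ^ (1 / q) := by
  have h := Real.arith_mean_le_rpow_mean Finset.univ ![1 / 2, 1 / 2] ![x, y] (by simp)
    (by simp; norm_num) (by simp [Fin.forall_fin_two, hx, hy]) hq
  simp only [Fin.sum_univ_two, Matrix.cons_val_zero, Matrix.cons_val_one] at h
  convert h using 1 <;> ring_nf

theorem abs_trapezoid_zpow_sub_average_le {a b : ℝ} {n : ℤ} (ha : 0 < a) (hab : a < b)
    (hn : n ≠ -1) :
    |(a ^ n + b ^ n) / 2 - (b ^ (n + 1) - a ^ (n + 1)) / (((n : ℝ) + 1) * (b - a))| ≤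
      |(n : ℝ)| * ((b - a) / 4) * ((a ^ (n - 1) + b ^ (n - 1)) / 2) := by
  have hpos : Icc a b ⊆ Ioi 0 := fun t ht => ha.trans_le ht.1
  have h0 : (0 : ℝ) ∉ [[a, b]] := by
    rw [uIcc_of_le hab.le]; exact fun h => lt_irrefl (0 : ℝ) (hpos h)
  have hconv : ConvexOn ℝ (Icc a b) fun t => |(n : ℝ) * t ^ (n - 1)| :=
    (((convexOn_zpow (n - 1)).subset hpos (convex_Icc a b)).smul (abs_nonneg (n : ℝ))).congr
      fun t ht => by
        simp only [smul_eq_mul, abs_mul, abs_of_pos (zpow_pos (mem_Ioi.1 (hpos ht)) (n - 1))]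
  have key := abs_trapezoid_sub_average_le hab
    (fun t ht => hasDerivAt_zpow n t (Or.inl (hpos ht).ne'))
    (continuousOn_const.mul ((continuousOn_zpow₀ (n - 1)).mono fun t ht => (hpos ht).ne')) hconv
  rw [integral_zpow (Or.inr ⟨hn, h0⟩)] at key
  convert key using 3
  · field_simp
  · rw [abs_mul, abs_mul, abs_of_pos (zpow_pos ha _), abs_of_pos (zpow_pos (ha.trans hab) _)]
    ring

/-- Proposition 3: for an integer `n` with `|n| ≥ 2`, `0 < a < b`, `p > 1`, and
`q = p/(p-1)`, `|A(aⁿ, bⁿ) − Lₙ(a,b)ⁿ| ≤ |n| ((b−a)/3) A(a^{q(n−1)}, b^{q(n−1)})^{1/q}`. -/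
theorem arith_p_log_mean_estimate (n : ℤ) (a b p q : ℝ) (hn : 2 ≤ |n|)
    (ha : 0 < a) (hab : a < b) (hp : 1 < p) (hq : q = p / (p - 1)) :
    |(a ^ n + b ^ n) / 2 - (b ^ (n + 1) - a ^ (n + 1)) / (((n : ℝ) + 1) * (b - a))| ≤
      |(n : ℝ)| * ((b - a) / 3) *
        ((a ^ (q * ((n : ℝ) - 1)) + b ^ (q * ((n : ℝ) - 1))) / 2) ^ (1 / q) := by
  have hb : 0 < b := ha.trans hab
  have hn1 : n ≠ -1 := by rintro rfl; norm_num at hn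
  have hq1 : 1 ≤ q := by rw [hq, le_div_iff₀ (by linarith)]; linarith
  have hrpow {x : ℝ} (hx : 0 < x) : x ^ (q * ((n : ℝ) - 1)) = (x ^ (n - 1)) ^ q := by
    rw [mul_comm, Real.rpow_mul hx.le, ← Real.rpow_intCast]; push_cast; rfl
  calc _ ≤ |(n : ℝ)| * ((b - a) / 4) * ((a ^ (n - 1) + b ^ (n - 1)) / 2) :=
        abs_trapezoid_zpow_sub_average_le ha hab hn1
    _ ≤ |(n : ℝ)| * ((b - a) / 3) * ((a ^ (n - 1) + b ^ (n - 1)) / 2) := by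
        gcongr
        norm_num
    _ ≤ _ := by
        rw [hrpow ha, hrpow hb]
        gcongr
        exact add_div_two_le_rpow_mean (zpow_pos ha _).le (zpow_pos hb _).le hq1
end

section
/- Let 0 ≤ a < b, let s ∈ (0,1], let p > 1 and q = p/(p−1), and let f : ℝ → ℝ be differentiable on an open interval containing [a, b] with f' integrable on [a, b]. Suppose |f'|^q is s-convex in the second sense on [a, b], i.e. for all x, y ∈ [a, b] and t ∈ [0,1], |f'(t·x + (1−t)·y)|^q ≤ t^s |f'(x)|^q + (1−t)^s |f'(y)|^q. Let D = {a = x₀ < x₁ < … < x_n = b} be any partition of [a, b], let S(f,D) = Σ_{k=0}^{n−1} ((f(x_k)+f(x_{k+1}))/2)(x_{k+1} − x_k) be the trapezoidal sum, and R(f,D) = ∫_a^b f(x) dx − S(f,D) the error. Then |R(f,D)| ≤ (1/2^{1/p}) · ( (s·2^s + 1) / (2^s (s+1)(s+2)) )^{1/q} · Σ_{k=0}^{n−1} ((x_{k+1} − x_k)²/2) ( |f'(x_k)| + |f'(x_{k+1})| ). -/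
/-!
On each cell `[u, v]` of the partition, integration by parts writes the trapezoidal error as
`∫ (m - t) f'(t) dt` with `m` the midpoint. Hölder's inequality for the weight `|m - t|` bounds
its absolute value by `(∫ |m - t|)^(1/p) (∫ |m - t| |f'|^q)^(1/q)`, and `s`-convexity bounds
`|f'(t)|^q` by `τ^s |f'(v)|^q + (1 - τ)^s |f'(u)|^q` with `τ = (t - u)/(v - u)`. The remaining
weighted integrals of `τ^s` are computed in closed form, and `(A^q + B^q)^(1/q) ≤ A + B`.
Summing over the cells gives the estimate.
-/

open MeasureTheory intervalIntegral Set

theorem integral_mul_le_weight_mul_Lp {α : Type*} [MeasurableSpace α] {μ : Measure α}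
    {p q : ℝ} (hpq : p.HolderConjugate q) {w g : α → ℝ} (hw : ∀ x, 0 ≤ w x) (hg : ∀ x, 0 ≤ g x)
    (hwi : Integrable w μ) (hgm : AEStronglyMeasurable g μ)
    (hwg : Integrable (fun x ↦ w x * g x ^ q) μ) :
    ∫ x, w x * g x ∂μ ≤ (∫ x, w x ∂μ) ^ (1 / p) * (∫ x, w x * g x ^ q ∂μ) ^ (1 / q) := by
  have hpq1 : 1 / p + 1 / q = 1 := hpq.one_div_add_one_div.trans one_div_one
  set F := fun x ↦ w x ^ (1 / p)
  set G := fun x ↦ w x ^ (1 / q) * g x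
  have hF0 : ∀ x, 0 ≤ F x := fun x ↦ Real.rpow_nonneg (hw x) _
  have hG0 : ∀ x, 0 ≤ G x := fun x ↦ mul_nonneg (Real.rpow_nonneg (hw x) _) (hg x)
  have hFp : ∀ x, F x ^ p = w x := fun x ↦ by
    rw [← Real.rpow_mul (hw x), one_div_mul_cancel hpq.ne_zero, Real.rpow_one]
  have hGq : ∀ x, G x ^ q = w x * g x ^ q := fun x ↦ by
    rw [Real.mul_rpow (Real.rpow_nonneg (hw x) _) (hg x), ← Real.rpow_mul (hw x),
      one_div_mul_cancel hpq.symm.ne_zero, Real.rpow_one]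
  have hFG : ∀ x, F x * G x = w x * g x := fun x ↦ by
    rw [← mul_assoc, ← Real.rpow_add' (hw x) (by rw [hpq1]; norm_num), hpq1, Real.rpow_one]
  have hFm : AEStronglyMeasurable F μ :=
    hwi.aestronglyMeasurable.aemeasurable.pow_const _ |>.aestronglyMeasurable
  have hGm : AEStronglyMeasurable G μ :=
    (hwi.aestronglyMeasurable.aemeasurable.pow_const _ |>.aestronglyMeasurable).mul hgm
  have memLp_of {H : α → ℝ} {r : ℝ} (hr : 0 < r) (hH0 : ∀ x, 0 ≤ H x)
      (hHm : AEStronglyMeasurable H μ) (hHr : Integrable (fun x ↦ H x ^ r) μ) :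
      MemLp H (ENNReal.ofReal r) μ := by
    refine (integrable_norm_rpow_iff hHm (by simpa using hr) ENNReal.ofReal_ne_top).1 ?_
    simpa only [ENNReal.toReal_ofReal hr.le, Real.norm_of_nonneg (hH0 _)] using hHr
  have := integral_mul_le_Lp_mul_Lq_of_nonneg hpq (.of_forall hF0) (.of_forall hG0)
    (memLp_of hpq.pos hF0 hFm (by simpa only [hFp] using hwi))
    (memLp_of hpq.symm.pos hG0 hGm (by simpa only [hGq] using hwg))
  simpa only [hFp, hGq, hFG] using this

theorem integral_abs_eq_of_hasDerivAt_of_nonpos_of_nonneg {F g : ℝ → ℝ} {a b c : ℝ}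
    (hac : a ≤ c) (hcb : c ≤ b) (hF : ∀ t ∈ Icc a b, HasDerivAt F (g t) t)
    (hg : IntervalIntegrable g volume a b) (hneg : ∀ t ∈ Icc a c, g t ≤ 0)
    (hpos : ∀ t ∈ Icc c b, 0 ≤ g t) :
    ∫ t in a..b, |g t| = F a + F b - 2 * F c := by
  have hab : a ≤ b := hac.trans hcb
  have hg₁ : IntervalIntegrable g volume a c :=
    hg.mono_set (by rw [uIcc_of_le hac, uIcc_of_le hab]; exact Icc_subset_Icc_right hcb)
  have hg₂ : IntervalIntegrable g volume c b :=
    hg.mono_set (by rw [uIcc_of_le hcb, uIcc_of_le hab]; exact Icc_subset_Icc_left hac)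
  have h₁ : ∫ t in a..c, |g t| = F a - F c := by
    rw [integral_congr (g := fun t ↦ -g t) fun t ht ↦ abs_of_nonpos (hneg t (uIcc_of_le hac ▸ ht)),
      intervalIntegral.integral_neg, integral_eq_sub_of_hasDerivAt
        (fun t ht ↦ hF t (Icc_subset_Icc_right hcb (uIcc_of_le hac ▸ ht))) hg₁, neg_sub]
  have h₂ : ∫ t in c..b, |g t| = F b - F c := by
    rw [integral_congr (g := g) fun t ht ↦ abs_of_nonneg (hpos t (uIcc_of_le hcb ▸ ht)),
      integral_eq_sub_of_hasDerivAt
        (fun t ht ↦ hF t (Icc_subset_Icc_left hac (uIcc_of_le hcb ▸ ht))) hg₂]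
  rw [← integral_add_adjacent_intervals hg₁.abs hg₂.abs, h₁, h₂]
  ring

noncomputable def midpointWeightPrimitive (s τ : ℝ) : ℝ :=
  τ ^ (s + 2) / (s + 2) - τ ^ (s + 1) / (2 * (s + 1))

theorem hasDerivAt_midpointWeightPrimitive {s τ : ℝ} (hs : 0 ≤ s) (hτ : 0 ≤ τ) :
    HasDerivAt (midpointWeightPrimitive s) ((τ - 2⁻¹) * τ ^ s) τ := by
  have h₂ := Real.hasDerivAt_rpow_const (x := τ) (p := s + 2) (Or.inr (by linarith))
  have h₁ := Real.hasDerivAt_rpow_const (x := τ) (p := s + 1) (Or.inr (by linarith))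
  refine ((h₂.div_const (s + 2)).sub (h₁.div_const (2 * (s + 1)))).congr_deriv ?_
  rw [show s + 2 - 1 = s + 1 by ring, add_sub_cancel_right, Real.rpow_add_one' hτ (by linarith)]
  field_simp

theorem midpointWeightPrimitive_zero_add_one_sub_two_mul_half {s : ℝ} (hs : 0 ≤ s) :
    midpointWeightPrimitive s 0 + midpointWeightPrimitive s 1 - 2 * midpointWeightPrimitive s 2⁻¹ =
      (s * 2 ^ s + 1) / (2 ^ s * (s + 1) * (s + 2)) / 2 := by
  have h0 : midpointWeightPrimitive s 0 = 0 := by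
    simp [midpointWeightPrimitive, Real.zero_rpow (show s + 2 ≠ 0 by linarith),
      Real.zero_rpow (show s + 1 ≠ 0 by linarith)]
  have h1 : midpointWeightPrimitive s 1 = 1 / (s + 2) - 1 / (2 * (s + 1)) := by
    simp only [midpointWeightPrimitive, Real.one_rpow]
  have hhalf : midpointWeightPrimitive s 2⁻¹ =
      ((2 : ℝ) ^ s)⁻¹ * (1 / (4 * (s + 2)) - 1 / (4 * (s + 1))) := by
    rw [midpointWeightPrimitive, show s + 2 = s + 1 + 1 by ring,
      Real.rpow_add_one' (by norm_num) (by linarith),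
      Real.rpow_add_one' (by norm_num) (by linarith), Real.inv_rpow (by norm_num)]
    field_simp
    ring
  rw [h0, h1, hhalf]
  have : (0 : ℝ) < 2 ^ s := by positivity
  field_simp
  ring

theorem integral_abs_midpoint_sub_mul_rpow {u v s : ℝ} (huv : u < v) (hs : 0 ≤ s) :
    ∫ t in u..v, |(u + v) / 2 - t| * ((t - u) / (v - u)) ^ s =
      (v - u) ^ 2 / 2 * ((s * 2 ^ s + 1) / (2 ^ s * (s + 1) * (s + 2))) := by
  set h := v - u
  have h0 : 0 < h := sub_pos.2 huv
  have hτ : ∀ t ∈ Icc u v, 0 ≤ (t - u) / h := fun t ht ↦ div_nonneg (by linarith [ht.1]) h0.le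
  have hP : ∀ t ∈ Icc u v, HasDerivAt (fun t ↦ h ^ 2 * midpointWeightPrimitive s ((t - u) / h))
      ((t - (u + v) / 2) * ((t - u) / h) ^ s) t := by
    intro t ht
    have := ((hasDerivAt_midpointWeightPrimitive hs (hτ t ht)).comp t
      (((hasDerivAt_id t).sub_const u).div_const h)).const_mul (h ^ 2)
    refine this.congr_deriv ?_
    field_simp
    ring
  have hg : Continuous fun t ↦ (t - (u + v) / 2) * ((t - u) / h) ^ s := by
    fun_prop (disch := exact hs)
  have hτs : ∀ t ∈ Icc u v, 0 ≤ ((t - u) / h) ^ s := fun t ht ↦ Real.rpow_nonneg (hτ t ht) s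
  rw [integral_congr (g := fun t ↦ |(t - (u + v) / 2) * ((t - u) / h) ^ s|) fun t ht ↦ by
      dsimp only
      rw [abs_mul, abs_of_nonneg (hτs t (uIcc_of_le huv.le ▸ ht)), abs_sub_comm],
    integral_abs_eq_of_hasDerivAt_of_nonpos_of_nonneg (c := (u + v) / 2) (by linarith)
      (by linarith) hP (hg.intervalIntegrable u v)
      (fun t ht ↦ mul_nonpos_of_nonpos_of_nonneg (by linarith [ht.2])
        (hτs t ⟨ht.1, by linarith [ht.2]⟩))
      (fun t ht ↦ mul_nonneg (by linarith [ht.1]) (hτs t ⟨by linarith [ht.1], ht.2⟩))]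
  have e0 : (u - u) / h = 0 := by simp
  have e1 : (v - u) / h = 1 := div_self h0.ne'
  have e2 : ((u + v) / 2 - u) / h = 2⁻¹ := by field_simp; ring
  rw [e0, e1, e2]
  linear_combination h ^ 2 * midpointWeightPrimitive_zero_add_one_sub_two_mul_half hs

theorem integral_abs_midpoint_sub_mul_rpow' {u v s : ℝ} (huv : u < v) (hs : 0 ≤ s) :
    ∫ t in u..v, |(u + v) / 2 - t| * ((v - t) / (v - u)) ^ s =
      (v - u) ^ 2 / 2 * ((s * 2 ^ s + 1) / (2 ^ s * (s + 1) * (s + 2))) := by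
  have hrefl := integral_comp_sub_left
    (fun t ↦ |(u + v) / 2 - t| * ((t - u) / (v - u)) ^ s) (a := u) (b := v) (u + v)
  simp only [add_sub_cancel_left, add_sub_cancel_right, show ∀ t, (u + v) / 2 - (u + v - t) =
    -((u + v) / 2 - t) by intros; ring, abs_neg, show ∀ t, u + v - t - u = v - t by intros; ring]
    at hrefl
  rw [hrefl, integral_abs_midpoint_sub_mul_rpow huv hs]

theorem integral_abs_midpoint_sub {u v : ℝ} (huv : u < v) :
    ∫ t in u..v, |(u + v) / 2 - t| = (v - u) ^ 2 / 4 := by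
  have := integral_abs_midpoint_sub_mul_rpow huv le_rfl
  simp only [Real.rpow_zero, mul_one] at this
  rw [this]
  ring

/-- `s`-convexity in the second sense. -/
def SConvexOn (s : ℝ) (S : Set ℝ) (φ : ℝ → ℝ) : Prop :=
  ∀ y ∈ S, ∀ z ∈ S, ∀ t ∈ Icc (0 : ℝ) 1, φ (t * y + (1 - t) * z) ≤ t ^ s * φ y + (1 - t) ^ s * φ z

namespace SConvexOn

variable {s u v : ℝ} {S T : Set ℝ} {φ : ℝ → ℝ}

theorem subset (hφ : SConvexOn s T φ) (hST : S ⊆ T) : SConvexOn s S φ :=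
  fun y hy z hz ↦ hφ y (hST hy) z (hST hz)

theorem le_of_mem_Icc {t : ℝ} (hφ : SConvexOn s (Icc u v) φ) (huv : u < v)
    (ht : t ∈ Icc u v) :
    φ t ≤ ((t - u) / (v - u)) ^ s * φ v + ((v - t) / (v - u)) ^ s * φ u := by
  have h0 : v - u ≠ 0 := (sub_pos.2 huv).ne'
  have hτ : (t - u) / (v - u) ∈ Icc (0 : ℝ) 1 := by
    rw [mem_Icc, div_nonneg_iff, div_le_one (sub_pos.2 huv)]
    exact ⟨.inl ⟨by linarith [ht.1], by linarith⟩, by linarith [ht.2]⟩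
  have hσ : 1 - (t - u) / (v - u) = (v - t) / (v - u) := by field_simp; ring
  have hcomb : (t - u) / (v - u) * v + (v - t) / (v - u) * u = t := by field_simp; ring
  simpa only [hσ, hcomb] using hφ v (right_mem_Icc.2 huv.le) u (left_mem_Icc.2 huv.le) _ hτ

theorem intervalIntegrable (hφ : SConvexOn s (Icc u v) φ) (huv : u < v)
    (hs : 0 ≤ s) (hφ0 : ∀ t ∈ Icc u v, 0 ≤ φ t)
    (hφm : AEStronglyMeasurable φ (volume.restrict (uIoc u v))) :
    IntervalIntegrable φ volume u v := by
  have hmajor : IntervalIntegrable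
      (fun t ↦ ((t - u) / (v - u)) ^ s * φ v + ((v - t) / (v - u)) ^ s * φ u) volume u v :=
    Continuous.intervalIntegrable (by fun_prop (disch := exact hs)) _ _
  refine hmajor.mono_fun' hφm (ae_restrict_of_forall_mem measurableSet_uIoc fun t ht ↦ ?_)
  have ht : t ∈ Icc u v := Ioc_subset_Icc_self (uIoc_of_le huv.le ▸ ht)
  dsimp only
  rw [Real.norm_of_nonneg (hφ0 t ht)]
  exact hφ.le_of_mem_Icc huv ht

theorem integral_abs_midpoint_sub_mul_le (hφ : SConvexOn s (Icc u v) φ) (huv : u < v)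
    (hs : 0 ≤ s) (hφi : IntervalIntegrable φ volume u v) :
    ∫ t in u..v, |(u + v) / 2 - t| * φ t ≤
      (v - u) ^ 2 / 2 * ((s * 2 ^ s + 1) / (2 ^ s * (s + 1) * (s + 2)) * (φ u + φ v)) := by
  have hw : Continuous fun t ↦ |(u + v) / 2 - t| := by fun_prop
  have hi₁ : IntervalIntegrable (fun t ↦ |(u + v) / 2 - t| * ((t - u) / (v - u)) ^ s) volume u v :=
    Continuous.intervalIntegrable (by fun_prop (disch := exact hs)) _ _
  have hi₂ : IntervalIntegrable (fun t ↦ |(u + v) / 2 - t| * ((v - t) / (v - u)) ^ s) volume u v :=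
    Continuous.intervalIntegrable (by fun_prop (disch := exact hs)) _ _
  calc ∫ t in u..v, |(u + v) / 2 - t| * φ t
      ≤ ∫ t in u..v, φ v * (|(u + v) / 2 - t| * ((t - u) / (v - u)) ^ s) +
          φ u * (|(u + v) / 2 - t| * ((v - t) / (v - u)) ^ s) := by
        refine integral_mono_on huv.le (hφi.continuousOn_mul hw.continuousOn)
          ((hi₁.const_mul _).add (hi₂.const_mul _)) fun t ht ↦ ?_
        have := mul_le_mul_of_nonneg_left (hφ.le_of_mem_Icc huv ht) (abs_nonneg ((u + v) / 2 - t))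
        linarith
    _ = (v - u) ^ 2 / 2 * ((s * 2 ^ s + 1) / (2 ^ s * (s + 1) * (s + 2)) * (φ u + φ v)) := by
        rw [integral_add (hi₁.const_mul _) (hi₂.const_mul _), intervalIntegral.integral_const_mul,
          intervalIntegral.integral_const_mul, integral_abs_midpoint_sub_mul_rpow huv hs,
          integral_abs_midpoint_sub_mul_rpow' huv hs]
        ring

end SConvexOn

theorem Real.HolderConjugate.mul_rpow_mul_mul_rpow {p q x y z : ℝ} (hpq : p.HolderConjugate q)
    (hx : 0 ≤ x) (hy : 0 ≤ y) (hz : 0 ≤ z) :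
    (x * y) ^ (1 / p) * (x * z) ^ (1 / q) = x * (y ^ (1 / p) * z ^ (1 / q)) := by
  have hpq1 : 1 / p + 1 / q = 1 := hpq.one_div_add_one_div.trans one_div_one
  have hx1 : x ^ (1 / p) * x ^ (1 / q) = x := by
    rw [← Real.rpow_add' hx (by rw [hpq1]; norm_num), hpq1, Real.rpow_one]
  rw [Real.mul_rpow hx hy, Real.mul_rpow hx hz]
  linear_combination (y ^ (1 / p) * z ^ (1 / q)) * hx1

theorem integral_sub_trapezoid_eq {f f' : ℝ → ℝ} {u v : ℝ}
    (hf : ∀ t ∈ uIcc u v, HasDerivAt f (f' t) t) (hf' : IntervalIntegrable f' volume u v) :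
    (∫ t in u..v, f t) - (f u + f v) / 2 * (v - u) = ∫ t in u..v, ((u + v) / 2 - t) * f' t := by
  have hparts := intervalIntegral.integral_mul_deriv_eq_deriv_mul (u := fun t ↦ t - (u + v) / 2)
    (fun t _ ↦ (hasDerivAt_id t).sub_const _) hf intervalIntegrable_const hf'
  simp only [one_mul] at hparts
  simp only [← neg_sub _ ((u + v) / 2), neg_mul, intervalIntegral.integral_neg, hparts]
  ring

theorem abs_integral_sub_trapezoid_le {f f' : ℝ → ℝ} {u v s p q : ℝ} (huv : u < v) (hs : 0 ≤ s)
    (hpq : p.HolderConjugate q) (hf : ∀ t ∈ uIcc u v, HasDerivAt f (f' t) t)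
    (hf' : IntervalIntegrable f' volume u v) (hconv : SConvexOn s (Icc u v) fun t ↦ |f' t| ^ q) :
    |(∫ t in u..v, f t) - (f u + f v) / 2 * (v - u)| ≤
      1 / 2 ^ (1 / p) * ((s * 2 ^ s + 1) / (2 ^ s * (s + 1) * (s + 2))) ^ (1 / q) *
        ((v - u) ^ 2 / 2 * (|f' u| + |f' v|)) := by
  set K := (s * 2 ^ s + 1) / (2 ^ s * (s + 1) * (s + 2))
  set m := (u + v) / 2
  have hK : 0 ≤ K := by positivity
  have hw : Continuous fun t ↦ |m - t| := by fun_prop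
  have hi : IntervalIntegrable (fun t ↦ |f' t| ^ q) volume u v :=
    hconv.intervalIntegrable huv hs (fun _ _ ↦ by positivity)
      ((continuous_abs.comp_aestronglyMeasurable hf'.def'.aestronglyMeasurable).aemeasurable
        |>.pow_const q |>.aestronglyMeasurable)
  have hholder : ∫ t in u..v, |m - t| * |f' t| ≤
      (∫ t in u..v, |m - t|) ^ (1 / p) * (∫ t in u..v, |m - t| * |f' t| ^ q) ^ (1 / q) := by
    simp only [integral_of_le huv.le]
    exact integral_mul_le_weight_mul_Lp hpq (fun _ ↦ abs_nonneg _) (fun _ ↦ abs_nonneg _)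
      hw.integrableOn_Ioc hf'.1.abs.aestronglyMeasurable (hi.continuousOn_mul hw.continuousOn).1
  calc |(∫ t in u..v, f t) - (f u + f v) / 2 * (v - u)|
      = |∫ t in u..v, (m - t) * f' t| := by rw [integral_sub_trapezoid_eq hf hf']
    _ ≤ ∫ t in u..v, |m - t| * |f' t| :=
        (abs_integral_le_integral_abs huv.le).trans_eq (integral_congr fun t _ ↦ abs_mul _ _)
    _ ≤ ((v - u) ^ 2 / 2 * 2⁻¹) ^ (1 / p) *
          ((v - u) ^ 2 / 2 * (K * (|f' u| ^ q + |f' v| ^ q))) ^ (1 / q) := by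
        refine hholder.trans ?_
        rw [integral_abs_midpoint_sub huv, show (v - u) ^ 2 / 4 = (v - u) ^ 2 / 2 * 2⁻¹ by ring]
        have : 0 ≤ ∫ t in u..v, |m - t| * |f' t| ^ q :=
          integral_nonneg huv.le fun t _ ↦ by positivity
        have : 0 ≤ 1 / q := one_div_nonneg.2 hpq.symm.pos.le
        gcongr
        exact hconv.integral_abs_midpoint_sub_mul_le huv hs hi
    _ = (v - u) ^ 2 / 2 * ((2⁻¹) ^ (1 / p) * (K * (|f' u| ^ q + |f' v| ^ q)) ^ (1 / q)) :=
        hpq.mul_rpow_mul_mul_rpow (by positivity) (by norm_num) (by positivity)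
    _ = 1 / 2 ^ (1 / p) * K ^ (1 / q) *
          ((v - u) ^ 2 / 2 * (|f' u| ^ q + |f' v| ^ q) ^ (1 / q)) := by
        rw [Real.inv_rpow zero_le_two, Real.mul_rpow hK (by positivity)]
        ring
    _ ≤ 1 / 2 ^ (1 / p) * K ^ (1 / q) * ((v - u) ^ 2 / 2 * (|f' u| + |f' v|)) := by
        gcongr
        exact Real.rpow_add_rpow_le_add (abs_nonneg _) (abs_nonneg _) hpq.symm.lt.le

theorem trapezoid_error_s_convex_holder_general (f f' : ℝ → ℝ) (a b s p q c d : ℝ) (n : ℕ)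
    (x : ℕ → ℝ)
    (hab : a < b) (hs : s ∈ Set.Ioc (0:ℝ) 1)
    (hp : 1 < p) (hq : q = p / (p - 1))
    (hc : c < a) (hd : b < d)
    (hdiff : ∀ y ∈ Set.Ioo c d, HasDerivAt f (f' y) y)
    (hint : IntervalIntegrable f' volume a b)
    (hconv : ∀ y ∈ Set.Icc a b, ∀ z ∈ Set.Icc a b, ∀ t ∈ Set.Icc (0:ℝ) 1,
      |f' (t * y + (1 - t) * z)| ^ q ≤ t ^ s * |f' y| ^ q + (1 - t) ^ s * |f' z| ^ q)
    (hx0 : x 0 = a) (hxn : x n = b)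
    (hxmono : ∀ k < n, x k < x (k + 1)) :
    |(∫ y in a..b, f y) -
        ∑ k ∈ Finset.range n, ((f (x k) + f (x (k + 1))) / 2) * (x (k + 1) - x k)| ≤
      (1 / 2 ^ (1 / p)) * ((s * 2 ^ s + 1) / (2 ^ s * (s + 1) * (s + 2))) ^ (1 / q) *
        ∑ k ∈ Finset.range n,
          ((x (k + 1) - x k) ^ 2 / 2) * (|f' (x k)| + |f' (x (k + 1))|) := by
  have hpq : p.HolderConjugate q := (Real.holderConjugate_iff_eq_conjExponent hp).2 hq
  have hx : StrictMonoOn x (Iic n) := strictMonoOn_Iic_of_lt_succ hxmono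
  have hcell : ∀ k < n, Icc (x k) (x (k + 1)) ⊆ Icc a b := fun k hk ↦ by
    rw [← hx0, ← hxn]
    exact Icc_subset_Icc (hx.monotoneOn (mem_Iic.2 n.zero_le) (mem_Iic.2 hk.le) k.zero_le)
      (hx.monotoneOn (mem_Iic.2 hk) (mem_Iic.2 le_rfl) hk)
  have hderiv : ∀ k < n, ∀ t ∈ uIcc (x k) (x (k + 1)), HasDerivAt f (f' t) t := fun k hk t ht ↦ by
    rw [uIcc_of_le (hxmono k hk).le] at ht
    exact hdiff t ⟨hc.trans_le (hcell k hk ht).1, (hcell k hk ht).2.trans_lt hd⟩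
  have hf : ∀ k < n, IntervalIntegrable f volume (x k) (x (k + 1)) := fun k hk ↦
    ContinuousOn.intervalIntegrable fun t ht ↦ (hderiv k hk t ht).continuousAt.continuousWithinAt
  rw [← hx0, ← hxn, ← sum_integral_adjacent_intervals hf, ← Finset.sum_sub_distrib, Finset.mul_sum]
  refine (Finset.abs_sum_le_sum_abs _ _).trans (Finset.sum_le_sum fun k hk ↦ ?_)
  have hk := Finset.mem_range.1 hk
  refine abs_integral_sub_trapezoid_le (hxmono k hk) hs.1.le hpq (hderiv k hk)
    (hint.mono_set ?_) (SConvexOn.subset hconv (hcell k hk))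
  rw [uIcc_of_le (hxmono k hk).le, uIcc_of_le hab.le]
  exact hcell k hk

/-- Proposition 4: trapezoidal error estimate when `|f'|^q` is `s`-convex in the
second sense, `p > 1`, `q = p/(p-1)`. -/
theorem trapezoid_error_s_convex_holder (f f' : ℝ → ℝ) (a b s p q c d : ℝ) (n : ℕ)
    (x : ℕ → ℝ)
    (ha : 0 ≤ a) (hab : a < b) (hs : s ∈ Set.Ioc (0:ℝ) 1)
    (hp : 1 < p) (hq : q = p / (p - 1))
    (hc : c < a) (hd : b < d)
    (hdiff : ∀ y ∈ Set.Ioo c d, HasDerivAt f (f' y) y)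
    (hint : IntervalIntegrable f' volume a b)
    (hconv : ∀ y ∈ Set.Icc a b, ∀ z ∈ Set.Icc a b, ∀ t ∈ Set.Icc (0:ℝ) 1,
      |f' (t * y + (1 - t) * z)| ^ q ≤ t ^ s * |f' y| ^ q + (1 - t) ^ s * |f' z| ^ q)
    (hx0 : x 0 = a) (hxn : x n = b)
    (hxmono : ∀ k < n, x k < x (k + 1)) :
    |(∫ y in a..b, f y) -
        ∑ k ∈ Finset.range n, ((f (x k) + f (x (k + 1))) / 2) * (x (k + 1) - x k)| ≤
      (1 / 2 ^ (1 / p)) * ((s * 2 ^ s + 1) / (2 ^ s * (s + 1) * (s + 2))) ^ (1 / q) *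
        ∑ k ∈ Finset.range n,
          ((x (k + 1) - x k) ^ 2 / 2) * (|f' (x k)| + |f' (x (k + 1))|) :=
  trapezoid_error_s_convex_holder_general f f' a b s p q c d n x hab hs hp hq hc hd hdiff hint hconv
    hx0 hxn hxmono
end
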